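/- arXiv:1908.06070 — 6 statements merged into one kernel-verified Lean document; each statement's English description precedes it below -/
import Mathlib

section
/- If π₁ and π₂ are symmetric and unimodal around 0 ∈ ℝ^{n₁} and 0 ∈ ℝ^{n₂}, respectively, then (x̃¹, x̃²) = (0, 0) is a global minimizer of J_κ, i.e., J_κ(0, 0) ≤ J_κ(x̃¹, x̃²) for all (x̃¹, x̃²) ∈ ℝ^{n₁} × ℝ^{n₂}. -/
/-!
Write `a = ‖X¹ - x̃¹‖²` and `b = ‖X² - x̃²‖²`. The integrand splits as
`min a κ + min b κ + min (a - κ)⁺ (b - κ)⁺`, and each summand is the minimum of two independent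
nonnegative variables (`κ` being a constant), so its upper tail `P(t < ·)` is the product of
their tails. By Anderson's inequality for a symmetric unimodal density, a ball of given radius
has the largest probability when centred at `0`, so the tails of `a` and `b` are smallest at
`x̃ = 0`. The layer-cake formula turns these tail comparisons into the comparison of
expectations.
-/

open MeasureTheory ProbabilityTheory

/-- A function on `ℝ^n` is *symmetric and unimodal* around `a` if
`‖x − a‖ ≤ ‖y − a‖` implies `f x ≥ f y`. -/
def SymmUnimodal {n : ℕ} (f : EuclideanSpace ℝ (Fin n) → ℝ)
    (a : EuclideanSpace ℝ (Fin n)) : Prop :=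
  ∀ x y : EuclideanSpace ℝ (Fin n), ‖x - a‖ ≤ ‖y - a‖ → f y ≤ f x

/-- `π` is the probability density function of the random vector `X` (with respect to
Lebesgue measure). -/
def IsDensityOf {Ω : Type} [MeasurableSpace Ω] (μ : Measure Ω) {n : ℕ}
    (X : Ω → EuclideanSpace ℝ (Fin n)) (π : EuclideanSpace ℝ (Fin n) → ℝ) : Prop :=
  Measurable π ∧ (∀ x, 0 ≤ π x) ∧
    μ.map X = (volume : Measure (EuclideanSpace ℝ (Fin n))).withDensity
      fun x => ENNReal.ofReal (π x)

open Set

def IsNormLowerSet {E : Type*} [Norm E] (S : Set E) : Prop :=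
  ∀ ⦃x y : E⦄, ‖x‖ ≤ ‖y‖ → y ∈ S → x ∈ S

/-- First-order stochastic dominance of `f` by `g`. -/
def TailLE {Ω : Type*} [MeasurableSpace Ω] (μ : Measure Ω) (f g : Ω → ℝ) : Prop :=
  ∀ t : ℝ, μ {ω | t < f ω} ≤ μ {ω | t < g ω}

section Anderson

variable {E : Type*} [NormedAddCommGroup E]

lemma IsNormLowerSet.subset_or_subset {S T : Set E} (hS : IsNormLowerSet S)
    (hT : IsNormLowerSet T) : S ⊆ T ∨ T ⊆ S := by
  by_contra! h
  obtain ⟨⟨x, hxS, hxT⟩, ⟨y, hyT, hyS⟩⟩ := And.intro (not_subset.1 h.1) (not_subset.1 h.2)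
  rcases le_total ‖x‖ ‖y‖ with hxy | hyx
  · exact hxT (hT hxy hyT)
  · exact hyS (hS hyx hxS)

variable [MeasurableSpace E] [MeasurableAdd E]

/-- Two norm lower sets are nested, so translating one of them can only shrink its
intersection with the other. -/
lemma IsNormLowerSet.measure_inter_preimage_sub_le (μ : Measure E) [μ.IsAddRightInvariant]
    {S B : Set E} (hS : IsNormLowerSet S) (hB : IsNormLowerSet B) (c : E) :
    μ (S ∩ (· - c) ⁻¹' B) ≤ μ (S ∩ B) := by
  rcases hB.subset_or_subset hS with hBS | hSB
  · rw [inter_eq_right.2 hBS]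
    calc μ (S ∩ (· - c) ⁻¹' B) ≤ μ ((· - c) ⁻¹' B) := measure_mono inter_subset_right
      _ = μ B := by simp_rw [sub_eq_add_neg]; exact measure_preimage_add_right μ (-c) B
  · rw [inter_eq_left.2 hSB]
    exact measure_mono inter_subset_left

/-- Anderson's inequality for norm lower sets: by the layer-cake formula it reduces to the
superlevel sets of `f`, which are norm lower sets. -/
lemma withDensity_preimage_sub_le (μ : Measure E) [μ.IsAddRightInvariant] [SFinite μ]
    {f : E → ℝ} (hf : Measurable f) (hf₀ : ∀ x, 0 ≤ f x)
    (hf_anti : ∀ x y, ‖x‖ ≤ ‖y‖ → f y ≤ f x) {B : Set E} (hB : IsNormLowerSet B) (c : E) :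
    μ.withDensity (fun x => ENNReal.ofReal (f x)) ((· - c) ⁻¹' B) ≤
      μ.withDensity (fun x => ENNReal.ofReal (f x)) B := by
  rw [withDensity_apply', withDensity_apply',
    lintegral_eq_lintegral_meas_lt _ (ae_of_all _ hf₀) hf.aemeasurable,
    lintegral_eq_lintegral_meas_lt _ (ae_of_all _ hf₀) hf.aemeasurable]
  refine lintegral_mono fun t => ?_
  rw [Measure.restrict_apply (measurableSet_lt measurable_const hf),
    Measure.restrict_apply (measurableSet_lt measurable_const hf)]
  exact IsNormLowerSet.measure_inter_preimage_sub_le μ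
    (fun x y hxy hy => hy.trans_le (hf_anti x y hxy)) hB c

end Anderson

namespace TailLE

variable {Ω : Type*} [MeasurableSpace Ω] {μ : Measure Ω}

lemma lintegral_ofReal_le {f g : Ω → ℝ} (h : TailLE μ f g) (hf₀ : 0 ≤ f) (hg₀ : 0 ≤ g)
    (hf : AEMeasurable f μ) (hg : AEMeasurable g μ) :
    ∫⁻ ω, ENNReal.ofReal (f ω) ∂μ ≤ ∫⁻ ω, ENNReal.ofReal (g ω) ∂μ := by
  rw [lintegral_eq_lintegral_meas_lt μ (ae_of_all _ hf₀) hf,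
    lintegral_eq_lintegral_meas_lt μ (ae_of_all _ hg₀) hg]
  exact lintegral_mono fun t => h t

lemma min_of_indepFun {f₁ f₂ g₁ g₂ : Ω → ℝ} (h₁ : TailLE μ f₁ g₁) (h₂ : TailLE μ f₂ g₂)
    (hf : IndepFun f₁ f₂ μ) (hg : IndepFun g₁ g₂ μ) :
    TailLE μ (fun ω => min (f₁ ω) (f₂ ω)) (fun ω => min (g₁ ω) (g₂ ω)) := by
  intro t
  have hset : ∀ u v : Ω → ℝ, {ω | t < min (u ω) (v ω)} = u ⁻¹' Ioi t ∩ v ⁻¹' Ioi t :=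
    fun u v => by ext; simp
  rw [hset, hset, hf.measure_inter_preimage_eq_mul _ _ measurableSet_Ioi measurableSet_Ioi,
    hg.measure_inter_preimage_eq_mul _ _ measurableSet_Ioi measurableSet_Ioi]
  exact mul_le_mul' (h₁ t) (h₂ t)

lemma posPart_sub {f g : Ω → ℝ} (h : TailLE μ f g) (κ : ℝ) :
    TailLE μ (fun ω => max (f ω - κ) 0) (fun ω => max (g ω - κ) 0) := by
  intro t
  rcases lt_or_ge t 0 with ht | ht
  · have hset : ∀ u : Ω → ℝ, {ω | t < max (u ω - κ) 0} = univ :=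
      fun u => eq_univ_of_forall fun ω => ht.trans_le (le_max_right _ _)
    rw [hset, hset]
  · have hset : ∀ u : Ω → ℝ, {ω | t < max (u ω - κ) 0} = {ω | t + κ < u ω} :=
      fun u => by ext; simp [ht.not_gt, lt_sub_iff_add_lt]
    rw [hset, hset]
    exact h (t + κ)

end TailLE

lemma min_add_min_add_const_eq (a b κ : ℝ) :
    min (a + b) (min (b + κ) (a + κ)) =
      min a κ + min b κ + min (max (a - κ) 0) (max (b - κ) 0) := by
  rcases le_total a κ with h1 | h1 <;> rcases le_total b κ with h2 | h2 <;>
    rcases le_total a b with h3 | h3 <;>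
    simp only [min_def, max_def] <;> split_ifs <;> linarith

lemma IsDensityOf.tailLE_norm_sub_sq {Ω : Type} [MeasurableSpace Ω] {μ : Measure Ω}
    [IsProbabilityMeasure μ] {n : ℕ}
    {X : Ω → EuclideanSpace ℝ (Fin n)} {π : EuclideanSpace ℝ (Fin n) → ℝ}
    (hπ : IsDensityOf μ X π) (hX : Measurable X) (hsu : SymmUnimodal π 0)
    (c : EuclideanSpace ℝ (Fin n)) :
    TailLE μ (fun ω => ‖X ω‖ ^ 2) (fun ω => ‖X ω - c‖ ^ 2) := by
  obtain ⟨hm, hnn, hmap⟩ := hπ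
  intro t
  set B := {x : EuclideanSpace ℝ (Fin n) | ‖x‖ ^ 2 ≤ t}
  have hB : IsNormLowerSet B := fun x y hxy hy => (pow_le_pow_left₀ (norm_nonneg x) hxy 2).trans hy
  have hBm : MeasurableSet B := measurableSet_le (by fun_prop) measurable_const
  have hBc : MeasurableSet ((· - c) ⁻¹' B) := hBm.preimage (by fun_prop)
  have key := withDensity_preimage_sub_le volume hm hnn (fun x y h => hsu x y (by simpa using h))
    hB c
  rw [← hmap, Measure.map_apply hX hBm, Measure.map_apply hX hBc] at key
  have hc : {ω | t < ‖X ω - c‖ ^ 2} = (X ⁻¹' ((· - c) ⁻¹' B))ᶜ := by ext; simp [B]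
  have h0 : {ω | t < ‖X ω‖ ^ 2} = (X ⁻¹' B)ᶜ := by ext; simp [B]
  rw [hc, h0, prob_compl_eq_one_sub (hX hBm), prob_compl_eq_one_sub (hX hBc)]
  exact tsub_le_tsub_left key 1

variable {Ω : Type*} [MeasurableSpace Ω] {μ : Measure Ω}

lemma lintegral_ofReal_min_add_const_eq {a b : Ω → ℝ} (ha : Measurable a) (hb : Measurable b)
    (ha₀ : 0 ≤ a) (hb₀ : 0 ≤ b) {κ : ℝ} (hκ : 0 ≤ κ) :
    ∫⁻ ω, ENNReal.ofReal (min (a ω + b ω) (min (b ω + κ) (a ω + κ))) ∂μ =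
      ∫⁻ ω, ENNReal.ofReal (min (a ω) κ) ∂μ + ∫⁻ ω, ENNReal.ofReal (min (b ω) κ) ∂μ +
        ∫⁻ ω, ENNReal.ofReal (min (max (a ω - κ) 0) (max (b ω - κ) 0)) ∂μ := by
  have hsplit : ∀ ω, ENNReal.ofReal (min (a ω + b ω) (min (b ω + κ) (a ω + κ))) =
      ENNReal.ofReal (min (a ω) κ) + ENNReal.ofReal (min (b ω) κ) +
        ENNReal.ofReal (min (max (a ω - κ) 0) (max (b ω - κ) 0)) := fun ω => by
    have ha' : 0 ≤ min (a ω) κ := le_min (ha₀ ω) hκ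
    have hb' : 0 ≤ min (b ω) κ := le_min (hb₀ ω) hκ
    rw [min_add_min_add_const_eq, ENNReal.ofReal_add (add_nonneg ha' hb')
      (le_min (le_max_right _ _) (le_max_right _ _)), ENNReal.ofReal_add ha' hb']
  simp_rw [hsplit]
  rw [lintegral_add_right _ (by fun_prop), lintegral_add_right _ (by fun_prop)]

theorem integral_min_add_const_le_of_tailLE [IsProbabilityMeasure μ] {a₀ b₀ a b : Ω → ℝ}
    (ha₀ : Measurable a₀) (hb₀ : Measurable b₀) (ha : Measurable a) (hb : Measurable b)
    (ha₀_nonneg : 0 ≤ a₀) (hb₀_nonneg : 0 ≤ b₀) (ha_nonneg : 0 ≤ a) (hb_nonneg : 0 ≤ b)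
    (hta : TailLE μ a₀ a) (htb : TailLE μ b₀ b)
    (hind₀ : IndepFun a₀ b₀ μ) (hind : IndepFun a b μ) (ha_int : Integrable a μ)
    {κ : ℝ} (hκ : 0 ≤ κ) :
    ∫ ω, min (a₀ ω + b₀ ω) (min (b₀ ω + κ) (a₀ ω + κ)) ∂μ ≤
      ∫ ω, min (a ω + b ω) (min (b ω + κ) (a ω + κ)) ∂μ := by
  have hF_nonneg : ∀ u v : Ω → ℝ, 0 ≤ u → 0 ≤ v →
      ∀ ω, 0 ≤ min (u ω + v ω) (min (v ω + κ) (u ω + κ)) := fun u v hu hv ω =>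
    le_min (add_nonneg (hu ω) (hv ω)) (le_min (add_nonneg (hv ω) hκ) (add_nonneg (hu ω) hκ))
  have hint : Integrable (fun ω => min (a ω + b ω) (min (b ω + κ) (a ω + κ))) μ := by
    refine (ha_int.add (integrable_const κ)).mono' (by fun_prop) (ae_of_all _ fun ω => ?_)
    rw [Real.norm_of_nonneg (hF_nonneg a b ha_nonneg hb_nonneg ω)]
    exact (min_le_right _ _).trans (min_le_right _ _)
  rw [integral_eq_lintegral_of_nonneg_ae (ae_of_all _ (hF_nonneg a₀ b₀ ha₀_nonneg hb₀_nonneg))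
      (by fun_prop),
    integral_eq_lintegral_of_nonneg_ae (ae_of_all _ (hF_nonneg a b ha_nonneg hb_nonneg))
      (by fun_prop)]
  refine ENNReal.toReal_mono hint.lintegral_lt_top.ne ?_
  rw [lintegral_ofReal_min_add_const_eq ha₀ hb₀ ha₀_nonneg hb₀_nonneg hκ,
    lintegral_ofReal_min_add_const_eq ha hb ha_nonneg hb_nonneg hκ]
  have htκ : TailLE μ (fun _ => κ) (fun _ => κ) := fun _ => le_rfl
  have hφ : Measurable fun s : ℝ => max (s - κ) 0 := by fun_prop
  gcongr ?_ + ?_ + ?_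
  · exact (hta.min_of_indepFun htκ (indepFun_const_right a₀ κ)
      (indepFun_const_right a κ)).lintegral_ofReal_le
      (fun ω => le_min (ha₀_nonneg ω) hκ) (fun ω => le_min (ha_nonneg ω) hκ)
      (by fun_prop) (by fun_prop)
  · exact (htb.min_of_indepFun htκ (indepFun_const_right b₀ κ)
      (indepFun_const_right b κ)).lintegral_ofReal_le
      (fun ω => le_min (hb₀_nonneg ω) hκ) (fun ω => le_min (hb_nonneg ω) hκ)
      (by fun_prop) (by fun_prop)
  · exact ((hta.posPart_sub κ).min_of_indepFun (htb.posPart_sub κ) (hind₀.comp hφ hφ)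
      (hind.comp hφ hφ)).lintegral_ofReal_le
      (fun ω => le_min (le_max_right _ _) (le_max_right _ _))
      (fun ω => le_min (le_max_right _ _) (le_max_right _ _)) (by fun_prop) (by fun_prop)

theorem zero_is_global_minimizer_general
    {Ω : Type} [MeasurableSpace Ω] (μ : Measure Ω) [IsProbabilityMeasure μ]
    (n₁ n₂ : ℕ)
    (X1 : Ω → EuclideanSpace ℝ (Fin n₁)) (X2 : Ω → EuclideanSpace ℝ (Fin n₂))
    (hX1 : Measurable X1) (hX2 : Measurable X2)
    (π₁ : EuclideanSpace ℝ (Fin n₁) → ℝ) (π₂ : EuclideanSpace ℝ (Fin n₂) → ℝ)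
    (hπ₁ : IsDensityOf μ X1 π₁) (hπ₂ : IsDensityOf μ X2 π₂)
    (hπ₁su : SymmUnimodal π₁ 0) (hπ₂su : SymmUnimodal π₂ 0)
    (hX1m : Integrable (fun ω => ‖X1 ω‖ ^ 2) μ)
    (hindep : IndepFun X1 X2 μ)
    (κ : ℝ) (hκ : 0 ≤ κ)
    (J : EuclideanSpace ℝ (Fin n₁) → EuclideanSpace ℝ (Fin n₂) → ℝ)
    (hJ : ∀ xt1 xt2, J xt1 xt2 = ∫ ω, min
      (‖X1 ω - xt1‖ ^ 2 + ‖X2 ω - xt2‖ ^ 2)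
      (min (‖X2 ω - xt2‖ ^ 2 + κ) (‖X1 ω - xt1‖ ^ 2 + κ)) ∂μ) :
    ∀ xt1 xt2, J 0 0 ≤ J xt1 xt2 := by
  intro c d
  have hint : Integrable (fun ω => ‖X1 ω - c‖ ^ 2) μ :=
    (memLp_two_iff_integrable_sq_norm (by fun_prop)).1
      (((memLp_two_iff_integrable_sq_norm hX1.aestronglyMeasurable).2 hX1m).sub (memLp_const c))
  have hφ₁ : Measurable fun x : EuclideanSpace ℝ (Fin n₁) => ‖x - c‖ ^ 2 := by fun_prop
  have hφ₂ : Measurable fun x : EuclideanSpace ℝ (Fin n₂) => ‖x - d‖ ^ 2 := by fun_prop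
  rw [hJ, hJ]
  simp only [sub_zero]
  exact integral_min_add_const_le_of_tailLE (by fun_prop) (by fun_prop) (by fun_prop)
    (by fun_prop) (fun ω => by positivity) (fun ω => by positivity) (fun ω => by positivity)
    (fun ω => by positivity) (hπ₁.tailLE_norm_sub_sq hX1 hπ₁su c)
    (hπ₂.tailLE_norm_sub_sq hX2 hπ₂su d)
    (hindep.comp (measurable_norm.pow_const 2) (measurable_norm.pow_const 2))
    (hindep.comp hφ₁ hφ₂) hint hκ

/-- If the densities `π₁, π₂` of the independent sources are symmetric
and unimodal around the origin, then `(0, 0)` is a global minimizer of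
`J_κ(x̃¹, x̃²) = E[min{‖X¹−x̃¹‖² + ‖X²−x̃²‖², ‖X²−x̃²‖² + κ, ‖X¹−x̃¹‖² + κ}]`. -/
theorem zero_is_global_minimizer
    {Ω : Type} [MeasurableSpace Ω] (μ : Measure Ω) [IsProbabilityMeasure μ]
    (n₁ n₂ : ℕ)
    (X1 : Ω → EuclideanSpace ℝ (Fin n₁)) (X2 : Ω → EuclideanSpace ℝ (Fin n₂))
    (hX1 : Measurable X1) (hX2 : Measurable X2)
    (π₁ : EuclideanSpace ℝ (Fin n₁) → ℝ) (π₂ : EuclideanSpace ℝ (Fin n₂) → ℝ)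
    (hπ₁ : IsDensityOf μ X1 π₁) (hπ₂ : IsDensityOf μ X2 π₂)
    (hπ₁su : SymmUnimodal π₁ 0) (hπ₂su : SymmUnimodal π₂ 0)
    (hX1m : Integrable (fun ω => ‖X1 ω‖ ^ 2) μ)
    (hX2m : Integrable (fun ω => ‖X2 ω‖ ^ 2) μ)
    (hindep : IndepFun X1 X2 μ)
    (κ : ℝ) (hκ : 0 ≤ κ)
    (J : EuclideanSpace ℝ (Fin n₁) → EuclideanSpace ℝ (Fin n₂) → ℝ)
    (hJ : ∀ xt1 xt2, J xt1 xt2 = ∫ ω, min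
      (‖X1 ω - xt1‖ ^ 2 + ‖X2 ω - xt2‖ ^ 2)
      (min (‖X2 ω - xt2‖ ^ 2 + κ) (‖X1 ω - xt1‖ ^ 2 + κ)) ∂μ) :
    ∀ xt1 xt2, J 0 0 ≤ J xt1 xt2 :=
  zero_is_global_minimizer_general μ n₁ n₂ X1 X2 hX1 hX2 π₁ π₂ hπ₁ hπ₂ hπ₁su hπ₂su hX1m hindep κ hκ
    J hJ
end

section
/- If π₁ is symmetric and unimodal around 0 ∈ ℝ^{n₁} (with no assumption on π₂ beyond being a probability density function with finite second moment), then for every x̃¹ ∈ ℝ^{n₁} and every x̃² ∈ ℝ^{n₂}, J_κ(0, x̃²) ≤ J_κ(x̃¹, x̃²). -/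
open MeasureTheory ProbabilityTheory

/-! Given `X²`, the integrand `min {a + b, b + κ, a + κ} = min {a + min {b, κ}, b + κ}` is a
nondecreasing function of `a = ‖X¹ − x̃¹‖²`. By the layer-cake formula and independence it
suffices to compare the `π₁`-masses of its sublevel sets, which are balls around `x̃¹` versus the
same balls around `0`. The two balls have equal volume, and the part gained by moving the ball to
`x̃¹` lies farther from `0` than the part lost, where the unimodal density is smaller. -/

open Set
open scoped ENNReal

lemma ProbabilityTheory.IndepFun.lintegral_comp_eq_lintegral_lintegral {Ω α β : Type*}
    [MeasurableSpace Ω] [MeasurableSpace α] [MeasurableSpace β] {μ : Measure Ω}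
    [IsFiniteMeasure μ] {X : Ω → α} {Y : Ω → β} (hXY : IndepFun X Y μ) (hX : Measurable X)
    (hY : Measurable Y) {G : α × β → ℝ≥0∞} (hG : Measurable G) :
    ∫⁻ ω, G (X ω, Y ω) ∂μ = ∫⁻ y, ∫⁻ x, G (x, y) ∂(μ.map X) ∂(μ.map Y) := by
  rw [← lintegral_map hG (hX.prodMk hY),
    (indepFun_iff_map_prod_eq_prod_map_map hX.aemeasurable hY.aemeasurable).1 hXY,
    lintegral_prod_symm _ hG.aemeasurable]

lemma integrable_norm_sub_const_sq {Ω E : Type*} [MeasurableSpace Ω] {μ : Measure Ω}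
    [IsFiniteMeasure μ] [NormedAddCommGroup E] {X : Ω → E} (hX : AEStronglyMeasurable X μ)
    (hX_sq : Integrable (fun ω => ‖X ω‖ ^ 2) μ) (a : E) :
    Integrable (fun ω => ‖X ω - a‖ ^ 2) μ :=
  (((memLp_two_iff_integrable_sq_norm hX).2 hX_sq).sub (memLp_const a)).integrable_norm_pow
    two_ne_zero

lemma withDensity_apply_le_of_forall_le {α : Type*} [MeasurableSpace α] {μ : Measure α}
    {f : α → ℝ≥0∞} {s t : Set α} (hs : MeasurableSet s) (ht : MeasurableSet t)
    (hst : μ s = μ t) (hf : ∀ x ∈ s, ∀ y ∈ t, f x ≤ f y) :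
    μ.withDensity f s ≤ μ.withDensity f t := by
  set p := ⨅ y ∈ t, f y
  rw [withDensity_apply _ hs, withDensity_apply _ ht]
  calc ∫⁻ x in s, f x ∂μ
      ≤ ∫⁻ _ in s, p ∂μ := setLIntegral_mono' hs fun x hx => le_iInf₂ (hf x hx)
    _ = ∫⁻ _ in t, p ∂μ := by rw [setLIntegral_const, setLIntegral_const, hst]
    _ ≤ ∫⁻ y in t, f y ∂μ := setLIntegral_mono' ht fun y hy => iInf₂_le y hy

namespace SymmUnimodal

variable {n : ℕ} {π : EuclideanSpace ℝ (Fin n) → ℝ}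

lemma withDensity_preimage_sub_le (hπ : SymmUnimodal π 0)
    {S : Set (EuclideanSpace ℝ (Fin n))} (hS : MeasurableSet S)
    (hS_lower : ∀ x y, ‖x‖ ≤ ‖y‖ → y ∈ S → x ∈ S) (c : EuclideanSpace ℝ (Fin n)) :
    volume.withDensity (fun x => ENNReal.ofReal (π x)) ((· - c) ⁻¹' S)
      ≤ volume.withDensity (fun x => ENNReal.ofReal (π x)) S := by
  set ν := volume.withDensity fun x => ENNReal.ofReal (π x)
  rcases eq_or_ne S univ with rfl | hS_ne
  · simp
  obtain ⟨z, hz⟩ := nonempty_compl.2 hS_ne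
  set A := (· - c) ⁻¹' S
  have hA : MeasurableSet A := hS.preimage (measurable_sub_const c)
  have hvol : volume A = volume S := by
    simp only [A, sub_eq_add_neg]
    exact measure_preimage_add_right volume (-c) S
  have hS_ball : S ⊆ Metric.ball 0 ‖z‖ := fun y hy => by
    by_contra hyz
    exact hz (hS_lower z y (by simpa using hyz) hy)
  have hS_fin : volume S ≠ ∞ := ((measure_mono hS_ball).trans_lt measure_ball_lt_top).ne
  have hdiff : volume (A \ S) = volume (S \ A) :=
    measure_sdiff_symm hA.nullMeasurableSet hS.nullMeasurableSet hvol
      (measure_ne_top_of_subset inter_subset_right hS_fin)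
  have hmass : ν (A \ S) ≤ ν (S \ A) :=
    withDensity_apply_le_of_forall_le (hA.diff hS) (hS.diff hA) hdiff
      fun x hx y hy => ENNReal.ofReal_le_ofReal <| hπ y x <| by
        by_contra hxy
        exact hx.2 (hS_lower x y (by simpa using (not_le.1 hxy).le) hy.1)
  calc ν A = ν (A \ S) + ν (A ∩ S) := (measure_sdiff_add_inter A hS).symm
    _ ≤ ν (S \ A) + ν (S ∩ A) := by rw [inter_comm]; gcongr
    _ = ν S := measure_sdiff_add_inter S hA

lemma lintegral_le_lintegral_comp_sub (hπ : SymmUnimodal π 0)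
    [IsFiniteMeasure (volume.withDensity fun x => ENNReal.ofReal (π x))]
    {f : EuclideanSpace ℝ (Fin n) → ℝ} (hf : Measurable f) (hf_nonneg : 0 ≤ f)
    (hf_mono : ∀ x y, ‖x‖ ≤ ‖y‖ → f x ≤ f y) (c : EuclideanSpace ℝ (Fin n)) :
    ∫⁻ x, ENNReal.ofReal (f x) ∂(volume.withDensity fun x => ENNReal.ofReal (π x))
      ≤ ∫⁻ x, ENNReal.ofReal (f (x - c))
          ∂(volume.withDensity fun x => ENNReal.ofReal (π x)) := by
  set ν := volume.withDensity fun x => ENNReal.ofReal (π x)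
  have hfc : Measurable fun x => f (x - c) := hf.comp (measurable_sub_const c)
  rw [lintegral_eq_lintegral_meas_lt ν (ae_of_all _ hf_nonneg) hf.aemeasurable,
    lintegral_eq_lintegral_meas_lt ν (f := fun x => f (x - c))
      (ae_of_all _ fun x => hf_nonneg (x - c)) hfc.aemeasurable]
  refine lintegral_mono fun t => ?_
  have hsub : MeasurableSet {x | f x ≤ t} := measurableSet_le hf measurable_const
  have hcompl (g : EuclideanSpace ℝ (Fin n) → ℝ) : {x | t < g x} = {x | g x ≤ t}ᶜ := by
    ext; simp
  rw [hcompl f, hcompl fun x => f (x - c), measure_compl hsub (measure_ne_top ν _),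
    measure_compl (measurableSet_le hfc measurable_const) (measure_ne_top ν _)]
  exact tsub_le_tsub_left (hπ.withDensity_preimage_sub_le hsub
    (fun x y hxy hy => (hf_mono x y hxy).trans hy) c) _

theorem integral_comp_le_integral_comp_sub {Ω : Type} [MeasurableSpace Ω] {μ : Measure Ω}
    [IsFiniteMeasure μ] {β : Type*} [MeasurableSpace β] {X : Ω → EuclideanSpace ℝ (Fin n)}
    {Y : Ω → β} (hX : Measurable X) (hY : Measurable Y) (hXπ : IsDensityOf μ X π)
    (hπ : SymmUnimodal π 0) (hXY : IndepFun X Y μ) {g : EuclideanSpace ℝ (Fin n) × β → ℝ}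
    (hg : Measurable g) (hg_nonneg : 0 ≤ g)
    (hg_mono : ∀ y x x', ‖x‖ ≤ ‖x'‖ → g (x, y) ≤ g (x', y)) (c : EuclideanSpace ℝ (Fin n))
    (hint : Integrable (fun ω => g (X ω - c, Y ω)) μ) :
    ∫ ω, g (X ω, Y ω) ∂μ ≤ ∫ ω, g (X ω - c, Y ω) ∂μ := by
  have hgc : Measurable fun p : EuclideanSpace ℝ (Fin n) × β => g (p.1 - c, p.2) :=
    hg.comp ((measurable_fst.sub_const c).prodMk measurable_snd)
  rw [integral_eq_lintegral_of_nonneg_ae (f := fun ω => g (X ω, Y ω))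
      (ae_of_all _ fun ω => hg_nonneg _) (hg.comp (hX.prodMk hY)).aestronglyMeasurable,
    integral_eq_lintegral_of_nonneg_ae (f := fun ω => g (X ω - c, Y ω))
      (ae_of_all _ fun ω => hg_nonneg _) (hgc.comp (hX.prodMk hY)).aestronglyMeasurable]
  refine ENNReal.toReal_mono hint.lintegral_lt_top.ne ?_
  rw [hXY.lintegral_comp_eq_lintegral_lintegral hX hY
      (G := fun p => ENNReal.ofReal (g p)) (ENNReal.measurable_ofReal.comp hg),
    hXY.lintegral_comp_eq_lintegral_lintegral hX hY
      (G := fun p => ENNReal.ofReal (g (p.1 - c, p.2))) (ENNReal.measurable_ofReal.comp hgc),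
    hXπ.2.2]
  have : IsFiniteMeasure (volume.withDensity fun x => ENNReal.ofReal (π x)) :=
    hXπ.2.2 ▸ inferInstance
  exact lintegral_mono fun y => hπ.lintegral_le_lintegral_comp_sub
    (hg.comp measurable_prodMk_right) (fun x => hg_nonneg _) (hg_mono y) c

end SymmUnimodal

theorem zero_first_coordinate_improves_general
    {Ω : Type} [MeasurableSpace Ω] (μ : Measure Ω) [IsProbabilityMeasure μ]
    (n₁ n₂ : ℕ)
    (X1 : Ω → EuclideanSpace ℝ (Fin n₁)) (X2 : Ω → EuclideanSpace ℝ (Fin n₂))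
    (hX1 : Measurable X1) (hX2 : Measurable X2)
    (π₁ : EuclideanSpace ℝ (Fin n₁) → ℝ)
    (hπ₁ : IsDensityOf μ X1 π₁)
    (hπ₁su : SymmUnimodal π₁ 0)
    (hX2m : Integrable (fun ω => ‖X2 ω‖ ^ 2) μ)
    (hindep : IndepFun X1 X2 μ)
    (κ : ℝ) (hκ : 0 ≤ κ)
    (J : EuclideanSpace ℝ (Fin n₁) → EuclideanSpace ℝ (Fin n₂) → ℝ)
    (hJ : ∀ xt1 xt2, J xt1 xt2 = ∫ ω, min
      (‖X1 ω - xt1‖ ^ 2 + ‖X2 ω - xt2‖ ^ 2)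
      (min (‖X2 ω - xt2‖ ^ 2 + κ) (‖X1 ω - xt1‖ ^ 2 + κ)) ∂μ) :
    ∀ xt1 xt2, J 0 xt2 ≤ J xt1 xt2 := by
  intro xt1 xt2
  set g : EuclideanSpace ℝ (Fin n₁) × EuclideanSpace ℝ (Fin n₂) → ℝ := fun p =>
    min (‖p.1‖ ^ 2 + min (‖p.2 - xt2‖ ^ 2) κ) (‖p.2 - xt2‖ ^ 2 + κ) with hg
  have hJg (c) : J c xt2 = ∫ ω, g (X1 ω - c, X2 ω) ∂μ := by
    rw [hJ]
    congr 1 with ω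
    simp only [hg]
    rw [← min_add_add_left, min_assoc, min_comm (_ + κ)]
  have hg_cont : Continuous g := by rw [hg]; fun_prop
  have hg_nonneg : 0 ≤ g := fun p =>
    le_min (add_nonneg (sq_nonneg _) (le_min (sq_nonneg _) hκ)) (add_nonneg (sq_nonneg _) hκ)
  have hg_mono (y) (x x' : EuclideanSpace ℝ (Fin n₁)) (hxx' : ‖x‖ ≤ ‖x'‖) :
      g (x, y) ≤ g (x', y) := by
    simp only [hg]
    gcongr
  have hg_int : Integrable (fun ω => g (X1 ω - xt1, X2 ω)) μ :=
    ((integrable_norm_sub_const_sq hX2.aestronglyMeasurable hX2m xt2).add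
      (integrable_const κ)).mono'
      (hg_cont.measurable.comp ((hX1.sub_const xt1).prodMk hX2)).aestronglyMeasurable
      (ae_of_all _ fun ω => by
        rw [Real.norm_of_nonneg (hg_nonneg _)]
        exact min_le_right _ _)
  simpa only [hJg, sub_zero] using hπ₁su.integral_comp_le_integral_comp_sub hX1 hX2 hπ₁ hindep
    hg_cont.measurable hg_nonneg hg_mono xt1 hg_int

/-- If the density `π₁` of the first source is symmetric and unimodal
around the origin (with no assumption on `π₂` beyond being a density of a source with
finite second moment), then replacing `x̃¹` by `0` can only decrease
`J_κ(x̃¹, x̃²) = E[min{‖X¹−x̃¹‖² + ‖X²−x̃²‖², ‖X²−x̃²‖² + κ, ‖X¹−x̃¹‖² + κ}]`. -/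
theorem zero_first_coordinate_improves
    {Ω : Type} [MeasurableSpace Ω] (μ : Measure Ω) [IsProbabilityMeasure μ]
    (n₁ n₂ : ℕ)
    (X1 : Ω → EuclideanSpace ℝ (Fin n₁)) (X2 : Ω → EuclideanSpace ℝ (Fin n₂))
    (hX1 : Measurable X1) (hX2 : Measurable X2)
    (π₁ : EuclideanSpace ℝ (Fin n₁) → ℝ) (π₂ : EuclideanSpace ℝ (Fin n₂) → ℝ)
    (hπ₁ : IsDensityOf μ X1 π₁) (hπ₂ : IsDensityOf μ X2 π₂)
    (hπ₁su : SymmUnimodal π₁ 0)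
    (hX1m : Integrable (fun ω => ‖X1 ω‖ ^ 2) μ)
    (hX2m : Integrable (fun ω => ‖X2 ω‖ ^ 2) μ)
    (hindep : IndepFun X1 X2 μ)
    (κ : ℝ) (hκ : 0 ≤ κ)
    (J : EuclideanSpace ℝ (Fin n₁) → EuclideanSpace ℝ (Fin n₂) → ℝ)
    (hJ : ∀ xt1 xt2, J xt1 xt2 = ∫ ω, min
      (‖X1 ω - xt1‖ ^ 2 + ‖X2 ω - xt2‖ ^ 2)
      (min (‖X2 ω - xt2‖ ^ 2 + κ) (‖X1 ω - xt1‖ ^ 2 + κ)) ∂μ) :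
    ∀ xt1 xt2, J 0 xt2 ≤ J xt1 xt2 :=
  zero_first_coordinate_improves_general μ n₁ n₂ X1 X2 hX1 hX2 π₁ hπ₁ hπ₁su hX2m hindep κ hκ J hJ
end

section
/- In the value recursion, for every t ∈ {1, …, T + 1}, the function e ↦ V_t(e) is nonincreasing on {0, 1, …, B}. -/
/-!
Backward induction in `t`. If `V (t + 1)` is nonincreasing on `{0, …, B}`, then so is
`e ↦ E[V (t + 1) (min (e + Z) B)]` on all of `ℕ`, because the clipped level `min (e + Z) B` is
monotone in `e`. Hence both continuation costs `C⁰ (e)` and `C¹ (e)` decrease with `e`, and so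
does the expected minimum defining `V t e` for `e ≥ 1`. Finally `V t 0` is the expectation of
the first branch of that minimum at `e = 0`, which dominates the minimum at any `e' ≥ 1`.
-/

open MeasureTheory ProbabilityTheory

section

variable {Ω : Type*} [MeasurableSpace Ω] {μ : Measure Ω}

lemma integrable_comp_min_add [IsFiniteMeasure μ] (W : ℕ → ℝ) {Z : Ω → ℕ} (hZ : Measurable Z)
    (e B : ℕ) : Integrable (fun ω => W (min (e + Z ω) B)) μ := by
  refine Integrable.of_bound
    ((measurable_from_top (f := fun n : ℕ => W (min (e + n) B))).comp hZ).aestronglyMeasurable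
    (∑ k ∈ Finset.range (B + 1), |W k|) (Filter.Eventually.of_forall fun ω => ?_)
  exact Finset.single_le_sum (fun k _ => abs_nonneg (W k))
    (Finset.mem_range.2 (Nat.lt_succ_of_le (min_le_right _ _)))

lemma antitone_integral_comp_min_add [IsFiniteMeasure μ] {W : ℕ → ℝ} {B : ℕ}
    (hW : AntitoneOn W (Set.Iic B)) {Z : Ω → ℕ} (hZ : Measurable Z) :
    Antitone fun e : ℕ => ∫ ω, W (min (e + Z ω) B) ∂μ := fun _ _ hee =>
  integral_mono (integrable_comp_min_add W hZ _ B) (integrable_comp_min_add W hZ _ B) fun _ =>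
    hW (Set.mem_Iic.2 (min_le_right _ _)) (Set.mem_Iic.2 (min_le_right _ _))
      (min_le_min_right B (Nat.add_le_add_right hee _))

variable {a b : Ω → ℝ}

lemma integrable_min_stage_cost [IsFiniteMeasure μ] (ha : Integrable a μ) (hb : Integrable b μ)
    (C₀ C₁ : ℝ) :
    Integrable (fun ω => min (a ω + b ω + C₀) (min (b ω + C₁) (a ω + C₁))) μ :=
  ((ha.add hb).add (integrable_const _)).inf
    ((hb.add (integrable_const _)).inf (ha.add (integrable_const _)))

lemma integral_min_stage_cost_mono [IsFiniteMeasure μ] (ha : Integrable a μ)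
    (hb : Integrable b μ) {C₀ C₀' C₁ C₁' : ℝ} (h₀ : C₀' ≤ C₀) (h₁ : C₁' ≤ C₁) :
    ∫ ω, min (a ω + b ω + C₀') (min (b ω + C₁') (a ω + C₁')) ∂μ ≤
      ∫ ω, min (a ω + b ω + C₀) (min (b ω + C₁) (a ω + C₁)) ∂μ :=
  integral_mono (integrable_min_stage_cost ha hb _ _) (integrable_min_stage_cost ha hb _ _)
    fun _ => min_le_min (by linarith) (min_le_min (by linarith) (by linarith))

lemma integral_min_stage_cost_le [IsProbabilityMeasure μ] (ha : Integrable a μ)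
    (hb : Integrable b μ) {C₀ C₀' : ℝ} (C₁ : ℝ) (h₀ : C₀' ≤ C₀) :
    ∫ ω, min (a ω + b ω + C₀') (min (b ω + C₁) (a ω + C₁)) ∂μ ≤
      (∫ ω, a ω ∂μ) + (∫ ω, b ω ∂μ) + C₀ :=
  calc ∫ ω, min (a ω + b ω + C₀') (min (b ω + C₁) (a ω + C₁)) ∂μ
      ≤ ∫ ω, (a ω + b ω + C₀) ∂μ :=
        integral_mono (integrable_min_stage_cost ha hb _ _)
          ((ha.add hb).add (integrable_const _)) fun _ => (min_le_left _ _).trans (by linarith)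
    _ = (∫ ω, a ω ∂μ) + (∫ ω, b ω ∂μ) + C₀ := by
        rw [integral_add (f := fun ω => a ω + b ω) (ha.add hb) (integrable_const _), integral_add ha hb, integral_const,
          probReal_univ, one_smul]

theorem antitoneOn_of_stage_recursion [IsProbabilityMeasure μ] (ha : Integrable a μ)
    (hb : Integrable b μ) {Z : Ω → ℕ} (hZ : Measurable Z) {B : ℕ} (c : ℝ) {v W : ℕ → ℝ}
    (hW : AntitoneOn W (Set.Iic B))
    (hv₀ : v 0 = (∫ ω, a ω ∂μ) + (∫ ω, b ω ∂μ) + ∫ ω, W (min (0 + Z ω) B) ∂μ)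
    (hv : ∀ e, 1 ≤ e → e ≤ B →
      v e = ∫ ω, min (a ω + b ω + ∫ ω', W (min (e + Z ω') B) ∂μ)
        (min (b ω + (c + ∫ ω', W (min (e - 1 + Z ω') B) ∂μ))
             (a ω + (c + ∫ ω', W (min (e - 1 + Z ω') B) ∂μ))) ∂μ) :
    AntitoneOn v (Set.Iic B) := by
  have hC := antitone_integral_comp_min_add (μ := μ) hW hZ
  intro e he e' he' hee
  rcases Nat.eq_zero_or_pos e with rfl | he_pos
  · rcases Nat.eq_zero_or_pos e' with rfl | he'_pos
    · exact le_rfl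
    · rw [hv e' he'_pos he', hv₀]
      exact integral_min_stage_cost_le ha hb _ (hC (Nat.zero_le e'))
  · rw [hv e he_pos he, hv e' (he_pos.trans_le hee) he']
    exact integral_min_stage_cost_mono ha hb (hC hee)
      (add_le_add le_rfl (hC (Nat.sub_le_sub_right hee 1)))

end

theorem value_function_nonincreasing_general
    {Ω : Type} [MeasurableSpace Ω] (μ : Measure Ω) [IsProbabilityMeasure μ]
    (n₁ n₂ B T : ℕ) (c : ℝ)
    (Z : Ω → ℕ) (hZmeas : Measurable Z)
    (X1 : Ω → EuclideanSpace ℝ (Fin n₁)) (X2 : Ω → EuclideanSpace ℝ (Fin n₂))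
    (hX1m : Integrable (fun ω => ‖X1 ω‖ ^ 2) μ)
    (hX2m : Integrable (fun ω => ‖X2 ω‖ ^ 2) μ)
    (V : ℕ → ℕ → ℝ)
    (hVT : ∀ e, e ≤ B → V (T + 1) e = 0)
    (hV0 : ∀ t, 1 ≤ t → t ≤ T →
      V t 0 = (∫ ω, ‖X1 ω‖ ^ 2 ∂μ) + (∫ ω, ‖X2 ω‖ ^ 2 ∂μ) +
        ∫ ω, V (t + 1) (min (0 + Z ω) B) ∂μ)
    (hVe : ∀ t, 1 ≤ t → t ≤ T → ∀ e, 1 ≤ e → e ≤ B →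
      V t e = ∫ ω, min
        (‖X1 ω‖ ^ 2 + ‖X2 ω‖ ^ 2 + ∫ ω', V (t + 1) (min (e + Z ω') B) ∂μ)
        (min (‖X2 ω‖ ^ 2 + (c + ∫ ω', V (t + 1) (min (e - 1 + Z ω') B) ∂μ))
             (‖X1 ω‖ ^ 2 + (c + ∫ ω', V (t + 1) (min (e - 1 + Z ω') B) ∂μ))) ∂μ) :
    ∀ t, 1 ≤ t → t ≤ T + 1 → ∀ e e' : ℕ, e ≤ e' → e' ≤ B → V t e' ≤ V t e := by
  intro t ht htT
  have hanti : AntitoneOn (V t) (Set.Iic B) := by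
    refine Nat.decreasingInduction' (P := fun k => AntitoneOn (V k) (Set.Iic B))
      (fun k hkT htk hsucc => ?_) htT fun e he e' he' _ => by rw [hVT e he, hVT e' he']
    have hkT' : k ≤ T := Nat.lt_succ_iff.1 hkT
    exact antitoneOn_of_stage_recursion hX1m hX2m hZmeas c hsucc
      (hV0 k (ht.trans htk) hkT') (hVe k (ht.trans htk) hkT')
  exact fun e e' hee he' => hanti (hee.trans he') he' hee

/-- In the value recursion of the dynamic program, the value
function `V t` is nonincreasing in the battery level `e ∈ {0, …, B}`, for every
`t ∈ {1, …, T + 1}`. -/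
theorem value_function_nonincreasing
    {Ω : Type} [MeasurableSpace Ω] (μ : Measure Ω) [IsProbabilityMeasure μ]
    (n₁ n₂ B T : ℕ) (hB : 1 ≤ B) (c : ℝ) (hc : 0 ≤ c)
    (Z : Ω → ℕ) (hZmeas : Measurable Z) (hZint : Integrable (fun ω => (Z ω : ℝ)) μ)
    (X1 : Ω → EuclideanSpace ℝ (Fin n₁)) (X2 : Ω → EuclideanSpace ℝ (Fin n₂))
    (hX1 : Measurable X1) (hX2 : Measurable X2)
    (hX1m : Integrable (fun ω => ‖X1 ω‖ ^ 2) μ)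
    (hX2m : Integrable (fun ω => ‖X2 ω‖ ^ 2) μ)
    (hindep12 : IndepFun X1 X2 μ)
    (hindepZ : IndepFun (fun ω => (X1 ω, X2 ω)) Z μ)
    (V : ℕ → ℕ → ℝ)
    (hVT : ∀ e, e ≤ B → V (T + 1) e = 0)
    (hV0 : ∀ t, 1 ≤ t → t ≤ T →
      V t 0 = (∫ ω, ‖X1 ω‖ ^ 2 ∂μ) + (∫ ω, ‖X2 ω‖ ^ 2 ∂μ) +
        ∫ ω, V (t + 1) (min (0 + Z ω) B) ∂μ)
    (hVe : ∀ t, 1 ≤ t → t ≤ T → ∀ e, 1 ≤ e → e ≤ B →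
      V t e = ∫ ω, min
        (‖X1 ω‖ ^ 2 + ‖X2 ω‖ ^ 2 + ∫ ω', V (t + 1) (min (e + Z ω') B) ∂μ)
        (min (‖X2 ω‖ ^ 2 + (c + ∫ ω', V (t + 1) (min (e - 1 + Z ω') B) ∂μ))
             (‖X1 ω‖ ^ 2 + (c + ∫ ω', V (t + 1) (min (e - 1 + Z ω') B) ∂μ))) ∂μ) :
    ∀ t, 1 ≤ t → t ≤ T + 1 → ∀ e e' : ℕ, e ≤ e' → e' ≤ B → V t e' ≤ V t e :=
  value_function_nonincreasing_general μ n₁ n₂ B T c Z hZmeas X1 X2 hX1m hX2m V hVT hV0 hVe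
end

section
/- In the value recursion, C¹_{t+1}(e) ≥ C⁰_{t+1}(e) for every t ∈ {1, …, T} and every e ∈ {1, …, B}; consequently the threshold τ*_t(e) := √(C¹_{t+1}(e) − C⁰_{t+1}(e)) is a well-defined real number for all such t and e. -/
/-! The value functions `V_t` are antitone in the energy level `e` on `{0, …, B}`, by backward
induction from `V_{T+1} = 0`: an antitone `V_{t+1}` makes `e ↦ C⁰_{t+1}(e)` antitone, and each of
the three options in the Bellman minimum then only gets cheaper when `e` grows (from `e = 0` to
`e = 1` the single forced option becomes one of three). Hence
`C⁰_{t+1}(e) ≤ C⁰_{t+1}(e - 1) ≤ c + C⁰_{t+1}(e - 1) = C¹_{t+1}(e)`, and the difference has a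
real square root. -/

open MeasureTheory ProbabilityTheory Set

section ValueRecursion

variable {Ω : Type*} [MeasurableSpace Ω] {μ : Measure Ω}

lemma integrable_comp_of_le [IsFiniteMeasure μ] (f : ℕ → ℝ) {N : Ω → ℕ} (hN : Measurable N)
    {B : ℕ} (hNB : ∀ ω, N ω ≤ B) : Integrable (fun ω => f (N ω)) μ := by
  refine .of_bound ((measurable_from_nat (f := f)).comp hN).aestronglyMeasurable
    (∑ k ∈ Finset.range (B + 1), |f k|) (Filter.Eventually.of_forall fun ω => ?_)
  exact Finset.single_le_sum (fun k _ => abs_nonneg (f k))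
    (Finset.mem_range.2 (Nat.lt_succ_of_le (hNB ω)))

/-- `E[v(min(e + Z, B))]`, the paper's `C⁰_{t+1}(e)` when `v = V_{t+1}`. -/
noncomputable def expectedNextValue (μ : Measure Ω) (Z : Ω → ℕ) (B : ℕ) (v : ℕ → ℝ) (e : ℕ) :
    ℝ :=
  ∫ ω, v (min (e + Z ω) B) ∂μ

lemma expectedNextValue_antitone [IsFiniteMeasure μ] {Z : Ω → ℕ} (hZ : Measurable Z) {B : ℕ}
    {v : ℕ → ℝ} (hv : AntitoneOn v (Iic B)) : Antitone (expectedNextValue μ Z B v) := by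
  intro e e' hee'
  have hint : ∀ e : ℕ, Integrable (fun ω => v (min (e + Z ω) B)) μ := fun e =>
    integrable_comp_of_le v ((measurable_from_nat (f := fun n => min (e + n) B)).comp hZ)
      fun _ => min_le_right _ _
  refine integral_mono (hint e') (hint e) fun ω =>
    hv (mem_Iic.2 (min_le_right _ _)) (mem_Iic.2 (min_le_right _ _)) ?_
  exact min_le_min_right B (Nat.add_le_add_right hee' _)

/-- The paper's `V_t(e)` for `e ≥ 1`, with `a = ‖X¹‖²`, `b = ‖X²‖²`, `p = C⁰_{t+1}(e)` and
`q = C⁰_{t+1}(e - 1)`. -/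
noncomputable def stageCost (μ : Measure Ω) (a b : Ω → ℝ) (c p q : ℝ) : ℝ :=
  ∫ ω, min (a ω + b ω + p) (min (b ω + (c + q)) (a ω + (c + q))) ∂μ

section StageCost

variable {a b : Ω → ℝ} (ha : Integrable a μ) (hb : Integrable b μ) (c : ℝ)
include ha hb

lemma integrable_stageCost_integrand [IsFiniteMeasure μ] (p q : ℝ) :
    Integrable (fun ω => min (a ω + b ω + p) (min (b ω + (c + q)) (a ω + (c + q)))) μ :=
  ((ha.add hb).add (integrable_const p)).inf
    ((hb.add (integrable_const _)).inf (ha.add (integrable_const _)))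

lemma stageCost_mono [IsFiniteMeasure μ] {p p' q q' : ℝ} (hp : p ≤ p') (hq : q ≤ q') :
    stageCost μ a b c p q ≤ stageCost μ a b c p' q' :=
  integral_mono (integrable_stageCost_integrand ha hb c p q)
    (integrable_stageCost_integrand ha hb c p' q') fun ω => by gcongr

lemma stageCost_le_integral_add [IsProbabilityMeasure μ] (p q : ℝ) :
    stageCost μ a b c p q ≤ (∫ ω, a ω ∂μ) + (∫ ω, b ω ∂μ) + p := by
  calc stageCost μ a b c p q ≤ ∫ ω, (a ω + b ω + p) ∂μ :=
        integral_mono (integrable_stageCost_integrand ha hb c p q)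
          ((ha.add hb).add (integrable_const p)) fun ω => min_le_left _ _
    _ = (∫ ω, a ω ∂μ) + (∫ ω, b ω ∂μ) + p := by
        rw [integral_add (f := fun ω => a ω + b ω) (ha.add hb) (integrable_const p),
          integral_add ha hb, integral_const,
          probReal_univ, one_smul]

end StageCost

lemma antitoneOn_of_bellman [IsProbabilityMeasure μ] {Z : Ω → ℕ} (hZ : Measurable Z) {B : ℕ}
    {a b : Ω → ℝ} (ha : Integrable a μ) (hb : Integrable b μ) (c : ℝ) {v w : ℕ → ℝ}
    (hv : AntitoneOn v (Iic B))
    (hw0 : w 0 = (∫ ω, a ω ∂μ) + (∫ ω, b ω ∂μ) + expectedNextValue μ Z B v 0)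
    (hw : ∀ e, 1 ≤ e → e ≤ B → w e =
      stageCost μ a b c (expectedNextValue μ Z B v e) (expectedNextValue μ Z B v (e - 1))) :
    AntitoneOn w (Iic B) := by
  have hC := expectedNextValue_antitone (μ := μ) hZ hv
  refine antitoneOn_of_le_sub_one ordConnected_Iic fun e he (heB : e ≤ B) _ => ?_
  have he1 : 1 ≤ e := Nat.one_le_iff_ne_zero.2 fun h => he (h ▸ isMin_bot)
  obtain rfl | he2 := he1.eq_or_lt
  · rw [hw 1 le_rfl heB, Nat.sub_self, hw0]
    linarith [stageCost_le_integral_add ha hb c (expectedNextValue μ Z B v 1)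
      (expectedNextValue μ Z B v 0), hC (Nat.zero_le 1)]
  · rw [hw e he1 heB, hw (e - 1) (by omega) (by omega)]
    exact stageCost_mono ha hb c (hC (Nat.sub_le e 1)) (hC (Nat.sub_le (e - 1) 1))

end ValueRecursion

theorem continuation_costs_ordered_thresholds_well_defined_general
    {Ω : Type} [MeasurableSpace Ω] (μ : Measure Ω) [IsProbabilityMeasure μ]
    (n₁ n₂ B T : ℕ) (c : ℝ) (hc : 0 ≤ c)
    (Z : Ω → ℕ) (hZmeas : Measurable Z)
    (X1 : Ω → EuclideanSpace ℝ (Fin n₁)) (X2 : Ω → EuclideanSpace ℝ (Fin n₂))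
    (hX1m : Integrable (fun ω => ‖X1 ω‖ ^ 2) μ)
    (hX2m : Integrable (fun ω => ‖X2 ω‖ ^ 2) μ)
    (V : ℕ → ℕ → ℝ)
    (hVT : ∀ e, e ≤ B → V (T + 1) e = 0)
    (hV0 : ∀ t, 1 ≤ t → t ≤ T →
      V t 0 = (∫ ω, ‖X1 ω‖ ^ 2 ∂μ) + (∫ ω, ‖X2 ω‖ ^ 2 ∂μ) +
        ∫ ω, V (t + 1) (min (0 + Z ω) B) ∂μ)
    (hVe : ∀ t, 1 ≤ t → t ≤ T → ∀ e, 1 ≤ e → e ≤ B →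
      V t e = ∫ ω, min
        (‖X1 ω‖ ^ 2 + ‖X2 ω‖ ^ 2 + ∫ ω', V (t + 1) (min (e + Z ω') B) ∂μ)
        (min (‖X2 ω‖ ^ 2 + (c + ∫ ω', V (t + 1) (min (e - 1 + Z ω') B) ∂μ))
             (‖X1 ω‖ ^ 2 + (c + ∫ ω', V (t + 1) (min (e - 1 + Z ω') B) ∂μ))) ∂μ) :
    ∀ t, 1 ≤ t → t ≤ T → ∀ e, 1 ≤ e → e ≤ B →
      (∫ ω, V (t + 1) (min (e + Z ω) B) ∂μ) ≤
          c + ∫ ω, V (t + 1) (min (e - 1 + Z ω) B) ∂μ ∧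
      Real.sqrt ((c + ∫ ω, V (t + 1) (min (e - 1 + Z ω) B) ∂μ) -
            ∫ ω, V (t + 1) (min (e + Z ω) B) ∂μ) ^ 2 =
        (c + ∫ ω, V (t + 1) (min (e - 1 + Z ω) B) ∂μ) -
          ∫ ω, V (t + 1) (min (e + Z ω) B) ∂μ := by
  have hanti : ∀ k ≤ T, AntitoneOn (V (k + 1)) (Iic B) := fun k hk => by
    induction hk using Nat.decreasingInduction with
    | self => exact fun e he e' he' _ => by rw [hVT e he, hVT e' he']
    | of_succ k hk ih =>
      exact antitoneOn_of_bellman hZmeas hX1m hX2m c ih (hV0 (k + 1) k.succ_pos hk)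
        (hVe (k + 1) k.succ_pos hk)
  intro t ht1 htT e he1 heB
  have hC : expectedNextValue μ Z B (V (t + 1)) e ≤ expectedNextValue μ Z B (V (t + 1)) (e - 1) :=
    expectedNextValue_antitone hZmeas (hanti t htT) (Nat.sub_le e 1)
  have hle : (∫ ω, V (t + 1) (min (e + Z ω) B) ∂μ) ≤
      c + ∫ ω, V (t + 1) (min (e - 1 + Z ω) B) ∂μ := by
    unfold expectedNextValue at hC; linarith
  exact ⟨hle, Real.sq_sqrt (sub_nonneg.2 hle)⟩

/-- In the value recursion of the dynamic program, the continuation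
cost of transmitting, `C¹_{t+1}(e) = c + E[V_{t+1}(min{e − 1 + Z, B})]`, dominates the
continuation cost of not transmitting, `C⁰_{t+1}(e) = E[V_{t+1}(min{e + Z, B})]`, for
every `t ∈ {1, …, T}` and `e ∈ {1, …, B}`; consequently the threshold
`τ*_t(e) = √(C¹_{t+1}(e) − C⁰_{t+1}(e))` is a well-defined real number, i.e. its square
recovers `C¹_{t+1}(e) − C⁰_{t+1}(e)`. -/
theorem continuation_costs_ordered_thresholds_well_defined
    {Ω : Type} [MeasurableSpace Ω] (μ : Measure Ω) [IsProbabilityMeasure μ]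
    (n₁ n₂ B T : ℕ) (hB : 1 ≤ B) (c : ℝ) (hc : 0 ≤ c)
    (Z : Ω → ℕ) (hZmeas : Measurable Z) (hZint : Integrable (fun ω => (Z ω : ℝ)) μ)
    (X1 : Ω → EuclideanSpace ℝ (Fin n₁)) (X2 : Ω → EuclideanSpace ℝ (Fin n₂))
    (hX1 : Measurable X1) (hX2 : Measurable X2)
    (hX1m : Integrable (fun ω => ‖X1 ω‖ ^ 2) μ)
    (hX2m : Integrable (fun ω => ‖X2 ω‖ ^ 2) μ)
    (hindep12 : IndepFun X1 X2 μ)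
    (hindepZ : IndepFun (fun ω => (X1 ω, X2 ω)) Z μ)
    (V : ℕ → ℕ → ℝ)
    (hVT : ∀ e, e ≤ B → V (T + 1) e = 0)
    (hV0 : ∀ t, 1 ≤ t → t ≤ T →
      V t 0 = (∫ ω, ‖X1 ω‖ ^ 2 ∂μ) + (∫ ω, ‖X2 ω‖ ^ 2 ∂μ) +
        ∫ ω, V (t + 1) (min (0 + Z ω) B) ∂μ)
    (hVe : ∀ t, 1 ≤ t → t ≤ T → ∀ e, 1 ≤ e → e ≤ B →
      V t e = ∫ ω, min
        (‖X1 ω‖ ^ 2 + ‖X2 ω‖ ^ 2 + ∫ ω', V (t + 1) (min (e + Z ω') B) ∂μ)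
        (min (‖X2 ω‖ ^ 2 + (c + ∫ ω', V (t + 1) (min (e - 1 + Z ω') B) ∂μ))
             (‖X1 ω‖ ^ 2 + (c + ∫ ω', V (t + 1) (min (e - 1 + Z ω') B) ∂μ))) ∂μ) :
    ∀ t, 1 ≤ t → t ≤ T → ∀ e, 1 ≤ e → e ≤ B →
      (∫ ω, V (t + 1) (min (e + Z ω) B) ∂μ) ≤
          c + ∫ ω, V (t + 1) (min (e - 1 + Z ω) B) ∂μ ∧
      Real.sqrt ((c + ∫ ω, V (t + 1) (min (e - 1 + Z ω) B) ∂μ) -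
            ∫ ω, V (t + 1) (min (e + Z ω) B) ∂μ) ^ 2 =
        (c + ∫ ω, V (t + 1) (min (e - 1 + Z ω) B) ∂μ) -
          ∫ ω, V (t + 1) (min (e + Z ω) B) ∂μ :=
  continuation_costs_ordered_thresholds_well_defined_general μ n₁ n₂ B T c hc Z hZmeas X1 X2 hX1m
    hX2m V hVT hV0 hVe
end

section
/- Let N ≥ 2 and let X¹, …, X^N be mutually independent random vectors, with X^i taking values in ℝ^{n_i}, having finite second moments and probability density functions that are symmetric and unimodal around 0. Let κ ≥ 0 and define, for (x̃¹, …, x̃^N) ∈ ℝ^{n₁} × ⋯ × ℝ^{n_N}, J(x̃¹, …, x̃^N) = E[ min{ Σ_{i=1}^N ‖X^i − x̃^i‖², min_{j ∈ {1,…,N}} ( Σ_{i ≠ j} ‖X^i − x̃^i‖² + κ ) } ]. Then (0, …, 0) is a global minimizer of J, i.e., J(0, …, 0) ≤ J(x̃¹, …, x̃^N) for all (x̃¹, …, x̃^N). -/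
/-!
The cost is nondecreasing in each squared error `‖Xⁱ - x̃ⁱ‖²`, so it suffices to show that
`E[H(X - b)]` is minimal at `b = 0` for every nonnegative `H` that is nondecreasing in the norm of
each coordinate. Independence makes the law of `X` a product measure, so by Fubini it is enough to
move one coordinate of `b` at a time, and by the layer-cake formula it is enough to compare the
probabilities of a set `U` that is closed under increasing the norm and of its translate `U + c`.
This is the simplest case of Anderson's inequality: `U \ (U + c)` and `(U + c) \ U` have the same
volume, and the density is pointwise smaller on the first than on the second.
-/

open MeasureTheory ProbabilityTheory

open Finset Function Metric
open scoped ENNReal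

section Anderson

variable {m : ℕ} {π : EuclideanSpace ℝ (Fin m) → ℝ}

theorem withDensity_le_withDensity_preimage_sub (hπ : Measurable π) (hsu : SymmUnimodal π 0)
    {U : Set (EuclideanSpace ℝ (Fin m))} (hUm : MeasurableSet U)
    (hU : ∀ x ∈ U, ∀ y, ‖x‖ ≤ ‖y‖ → y ∈ U) (c : EuclideanSpace ℝ (Fin m)) :
    volume.withDensity (fun x => ENNReal.ofReal (π x)) U
      ≤ volume.withDensity (fun x => ENNReal.ofReal (π x)) ((· - c) ⁻¹' U) := by
  set ν := volume.withDensity fun x => ENNReal.ofReal (π x)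
  set W := (· - c) ⁻¹' U
  rcases U.eq_empty_or_nonempty with rfl | ⟨y₀, hy₀⟩
  · simp
  have hWm : MeasurableSet W := hUm.preimage (measurable_id.sub_const c)
  have hnorm_lt : ∀ x ∉ U, ∀ y ∈ U, ‖x‖ < ‖y‖ := fun x hx y hy =>
    lt_of_not_ge fun h => hx (hU y hy x h)
  have hvol : volume (U \ W) = volume (W \ U) := by
    have hfin : volume Uᶜ ≠ ∞ := (Bornology.IsBounded.measure_lt_top
      ((isBounded_ball (x := 0) (r := ‖y₀‖)).subset fun x hx => by
        simpa using hnorm_lt x hx y₀ hy₀)).ne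
    have hWU : volume Wᶜ = volume Uᶜ := by
      rw [← measure_preimage_add_right volume (-c) Uᶜ]
      simp only [W, Set.preimage_compl, sub_eq_add_neg]
    rw [← compl_sdiff_compl, ← compl_sdiff_compl (x := U)]
    exact measure_sdiff_symm hWm.compl.nullMeasurableSet hUm.compl.nullMeasurableSet hWU
      (ne_top_of_le_ne_top hfin (measure_mono Set.inter_subset_right))
  -- `θ` separates the density on `U \ W` from the density on `W \ U`
  set θ := ⨅ x ∈ W \ U, ENNReal.ofReal (π x)
  have hUW : ν (U \ W) ≤ θ * volume (U \ W) := by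
    rw [withDensity_apply _ (hUm.diff hWm), ← setLIntegral_const]
    refine setLIntegral_mono measurable_const fun y hy => le_iInf₂ fun x hx => ?_
    exact ENNReal.ofReal_le_ofReal (hsu x y (by simpa using (hnorm_lt x hx.2 y hy.1).le))
  have hWU : θ * volume (W \ U) ≤ ν (W \ U) := by
    rw [withDensity_apply _ (hWm.diff hUm), ← setLIntegral_const]
    exact setLIntegral_mono hπ.ennreal_ofReal fun x hx => iInf₂_le x hx
  calc ν U = ν (U ∩ W) + ν (U \ W) := (measure_inter_add_sdiff U hWm).symm
    _ ≤ ν (W ∩ U) + ν (W \ U) := by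
      rw [Set.inter_comm]
      exact add_le_add le_rfl (hUW.trans (hvol ▸ hWU))
    _ = ν W := measure_inter_add_sdiff W hUm

theorem lintegral_withDensity_le_lintegral_comp_sub (hπ : Measurable π) (hsu : SymmUnimodal π 0)
    {g : EuclideanSpace ℝ (Fin m) → ℝ} (hg : Measurable g) (hg0 : 0 ≤ g)
    (hmono : ∀ y z, ‖y‖ ≤ ‖z‖ → g y ≤ g z) (c : EuclideanSpace ℝ (Fin m)) :
    ∫⁻ y, ENNReal.ofReal (g y) ∂volume.withDensity (fun x => ENNReal.ofReal (π x))
      ≤ ∫⁻ y, ENNReal.ofReal (g (y - c)) ∂volume.withDensity (fun x => ENNReal.ofReal (π x)) := by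
  rw [lintegral_eq_lintegral_meas_lt _ (ae_of_all _ hg0) hg.aemeasurable,
    lintegral_eq_lintegral_meas_lt (f := fun y => g (y - c)) _ (ae_of_all _ fun y => hg0 (y - c))
      (hg.comp (measurable_id.sub_const c)).aemeasurable]
  refine lintegral_mono fun t => withDensity_le_withDensity_preimage_sub hπ hsu
    (measurableSet_lt measurable_const hg) (fun x hx y hxy => hx.trans_le (hmono x y hxy)) c

end Anderson

theorem update_sub_sub_update_zero {ι : Type*} [DecidableEq ι] {β : ι → Type*}
    [∀ i, AddGroup (β i)] (x b : ∀ i, β i) (j : ι) :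
    update x j (x j - b j) - update b j 0 = x - b := by
  ext1 i
  rcases eq_or_ne i j with rfl | h <;> simp [*]

section Product

variable {ι : Type*} [Fintype ι] [DecidableEq ι] {n : ι → ℕ}
  {ν : ∀ i, Measure (EuclideanSpace ℝ (Fin (n i)))} [∀ i, SigmaFinite (ν i)]
  {π : ∀ i, EuclideanSpace ℝ (Fin (n i)) → ℝ}

theorem lintegral_pi_le_lintegral_pi_update_sub (j : ι) (hπ : Measurable (π j))
    (hsu : SymmUnimodal (π j) 0)
    (hν : ν j = volume.withDensity fun x => ENNReal.ofReal (π j x))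
    {H : (∀ i, EuclideanSpace ℝ (Fin (n i))) → ℝ} (hH : Measurable H) (hH0 : 0 ≤ H)
    (hmono : ∀ x y z, ‖y‖ ≤ ‖z‖ → H (update x j y) ≤ H (update x j z))
    (c : EuclideanSpace ℝ (Fin (n j))) :
    ∫⁻ x, ENNReal.ofReal (H x) ∂Measure.pi ν
      ≤ ∫⁻ x, ENNReal.ofReal (H (update x j (x j - c))) ∂Measure.pi ν := by
  have hshift : Measurable fun x : ∀ i, EuclideanSpace ℝ (Fin (n i)) => update x j (x j - c) := by
    fun_prop
  refine lintegral_le_of_lmarginal_le {j} hH.ennreal_ofReal (hH.comp hshift).ennreal_ofReal ?_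
  intro x
  simp only [lmarginal_singleton, update_idem, update_self, hν]
  exact lintegral_withDensity_le_lintegral_comp_sub hπ hsu (hH.comp (measurable_update x))
    (fun y => hH0 _) (hmono x) c

theorem lintegral_pi_le_lintegral_pi_comp_sub (hπ : ∀ i, Measurable (π i))
    (hsu : ∀ i, SymmUnimodal (π i) 0)
    (hν : ∀ i, ν i = volume.withDensity fun x => ENNReal.ofReal (π i x))
    {H : (∀ i, EuclideanSpace ℝ (Fin (n i))) → ℝ} (hH : Measurable H) (hH0 : 0 ≤ H)
    (hmono : ∀ x y, (∀ i, ‖x i‖ ≤ ‖y i‖) → H x ≤ H y) (b : ∀ i, EuclideanSpace ℝ (Fin (n i))) :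
    ∫⁻ x, ENNReal.ofReal (H x) ∂Measure.pi ν ≤ ∫⁻ x, ENNReal.ofReal (H (x - b)) ∂Measure.pi ν := by
  suffices ∀ s : Finset ι, ∀ b, (∀ i ∉ s, b i = 0) →
      ∫⁻ x, ENNReal.ofReal (H x) ∂Measure.pi ν ≤ ∫⁻ x, ENNReal.ofReal (H (x - b)) ∂Measure.pi ν
    from this univ b fun i hi => absurd (mem_univ i) hi
  intro s
  induction s using Finset.induction_on with
  | empty =>
    intro b hb
    obtain rfl : b = 0 := funext fun i => hb i (notMem_empty i)
    simp
  | insert j s hj ih =>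
    intro b hb
    set b' := update b j 0
    have hb' : ∀ i ∉ s, b' i = 0 := fun i hi => by
      rcases eq_or_ne i j with rfl | hij
      · simp [b']
      · simpa [b', hij] using hb i (by simp [hij, hi])
    calc ∫⁻ x, ENNReal.ofReal (H x) ∂Measure.pi ν
        ≤ ∫⁻ x, ENNReal.ofReal (H (x - b')) ∂Measure.pi ν := ih b' hb'
      _ ≤ ∫⁻ x, ENNReal.ofReal (H (update x j (x j - b j) - b')) ∂Measure.pi ν := by
        refine lintegral_pi_le_lintegral_pi_update_sub j (hπ j) (hsu j) (hν j)
          (hH.comp (measurable_id.sub_const b')) (fun x => hH0 (x - b'))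
          (fun x y z hyz => hmono _ _ ?_) _
        intro i
        rcases eq_or_ne i j with rfl | hij
        · simpa [b'] using hyz
        · simp [hij]
      _ = ∫⁻ x, ENNReal.ofReal (H (x - b)) ∂Measure.pi ν := by
        simp only [b', update_sub_sub_update_zero]

end Product

theorem ProbabilityTheory.iIndepFun.lintegral_pi_map {Ω ι : Type*} [MeasurableSpace Ω]
    {μ : Measure Ω} [Fintype ι] {E : ι → Type*} [∀ i, MeasurableSpace (E i)]
    {X : ∀ i, Ω → E i} (hindep : iIndepFun X μ) (hX : ∀ i, Measurable (X i))
    {f : (∀ i, E i) → ℝ≥0∞} (hf : Measurable f) :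
    ∫⁻ x, f x ∂Measure.pi (fun i => μ.map (X i)) = ∫⁻ ω, f (fun i => X i ω) ∂μ := by
  rw [← hindep.map_fun_eq_pi_map fun i => (hX i).aemeasurable,
    lintegral_map hf (measurable_pi_lambda _ hX)]

theorem integrable_sq_norm_sub_const {Ω E : Type*} [MeasurableSpace Ω] {μ : Measure Ω}
    [IsFiniteMeasure μ] [NormedAddCommGroup E] {X : Ω → E} (hX : AEStronglyMeasurable X μ)
    (h : Integrable (fun ω => ‖X ω‖ ^ 2) μ) (c : E) :
    Integrable (fun ω => ‖X ω - c‖ ^ 2) μ :=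
  (memLp_two_iff_integrable_sq_norm (hX.sub aestronglyMeasurable_const)).1
    (((memLp_two_iff_integrable_sq_norm hX).2 h).sub (memLp_const c))

section SensorCost

variable {ι : Type*} [Fintype ι] [DecidableEq ι] (hι : (univ : Finset ι).Nonempty)

/-- The per-stage cost as a function of the squared estimation errors `u i = ‖Xⁱ - x̃ⁱ‖²`. -/
def sensorCost (κ : ℝ) (u : ι → ℝ) : ℝ :=
  min (∑ i, u i) (univ.inf' hι fun j => (∑ i ∈ univ.erase j, u i) + κ)

theorem sensorCost_mono (κ : ℝ) : Monotone (sensorCost hι κ) := fun _ _ huv =>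
  min_le_min (sum_le_sum fun i _ => huv i) <| le_inf' _ _ fun _ hj =>
    (inf'_le _ hj).trans (add_le_add_left (sum_le_sum fun i _ => huv i) κ)

theorem sensorCost_nonneg {κ : ℝ} (hκ : 0 ≤ κ) {u : ι → ℝ} (hu : 0 ≤ u) :
    0 ≤ sensorCost hι κ u :=
  le_min (sum_nonneg fun i _ => hu i) <| le_inf' _ _ fun _ _ =>
    add_nonneg (sum_nonneg fun i _ => hu i) hκ

theorem sensorCost_le_sum (κ : ℝ) (u : ι → ℝ) : sensorCost hι κ u ≤ ∑ i, u i := min_le_left _ _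

theorem continuous_sensorCost (κ : ℝ) : Continuous (sensorCost hι κ) := by
  unfold sensorCost
  fun_prop

theorem integrable_sensorCost {Ω : Type*} [MeasurableSpace Ω] {μ : Measure Ω} {κ : ℝ}
    (hκ : 0 ≤ κ) {u : ι → Ω → ℝ} (hu : ∀ i, Integrable (u i) μ) (hu0 : ∀ i ω, 0 ≤ u i ω) :
    Integrable (fun ω => sensorCost hι κ fun i => u i ω) μ :=
  (integrable_finsetSum _ fun i _ => hu i).mono'
    ((continuous_sensorCost hι κ).measurable.comp_aemeasurable
      (aemeasurable_pi_lambda _ fun i => (hu i).aemeasurable)).aestronglyMeasurable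
    (ae_of_all _ fun ω =>
      (Real.norm_of_nonneg (sensorCost_nonneg hι hκ fun i => hu0 i ω)).trans_le
        (sensorCost_le_sum hι κ _))

end SensorCost

/-- The `N`-sensor per-stage optimization: for `N ≥ 2` mutually
independent sources with symmetric and unimodal densities around the origin and finite
second moments, the all-zero prescription is a global minimizer of
`J(x̃¹,…,x̃^N) = E[min{Σᵢ‖Xⁱ−x̃ⁱ‖², min_j (Σ_{i≠j}‖Xⁱ−x̃ⁱ‖² + κ)}]`. -/
theorem zero_is_global_minimizer_N_sensors
    {Ω : Type} [MeasurableSpace Ω] (μ : Measure Ω) [IsProbabilityMeasure μ]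
    (N : ℕ) (hN : 2 ≤ N) (n : Fin N → ℕ)
    (X : ∀ i : Fin N, Ω → EuclideanSpace ℝ (Fin (n i)))
    (hXmeas : ∀ i, Measurable (X i))
    (hindep : iIndepFun X μ)
    (π : ∀ i : Fin N, EuclideanSpace ℝ (Fin (n i)) → ℝ)
    (hπ : ∀ i, IsDensityOf μ (X i) (π i))
    (hπsu : ∀ i, SymmUnimodal (π i) 0)
    (hXm : ∀ i, Integrable (fun ω => ‖X i ω‖ ^ 2) μ)
    (κ : ℝ) (hκ : 0 ≤ κ)
    (J : (∀ i : Fin N, EuclideanSpace ℝ (Fin (n i))) → ℝ)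
    (hJ : ∀ xt, J xt = ∫ ω, min (∑ i, ‖X i ω - xt i‖ ^ 2)
      (Finset.univ.inf' (Finset.univ_nonempty_iff.mpr ⟨⟨0, by omega⟩⟩)
        fun j => (∑ i ∈ Finset.univ.erase j, ‖X i ω - xt i‖ ^ 2) + κ) ∂μ) :
    ∀ xt, J (fun _ => 0) ≤ J xt := by
  intro xt
  have hne : (univ : Finset (Fin N)).Nonempty := univ_nonempty_iff.mpr ⟨⟨0, by omega⟩⟩
  set H : (∀ i, EuclideanSpace ℝ (Fin (n i))) → ℝ := fun x => sensorCost hne κ fun i => ‖x i‖ ^ 2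
  have hH : Measurable H := ((continuous_sensorCost hne κ).comp (by fun_prop)).measurable
  have hH0 : 0 ≤ H := fun x => sensorCost_nonneg hne hκ fun i => sq_nonneg _
  have hHmono : ∀ x y, (∀ i, ‖x i‖ ≤ ‖y i‖) → H x ≤ H y := fun x y h =>
    sensorCost_mono hne κ fun i => pow_le_pow_left₀ (norm_nonneg _) (h i) 2
  have : ∀ i, IsProbabilityMeasure (μ.map (X i)) := fun i =>
    Measure.isProbabilityMeasure_map (hXmeas i).aemeasurable
  have hJ_eq : ∀ b, J b
      = (∫⁻ x, ENNReal.ofReal (H (x - b)) ∂Measure.pi fun i => μ.map (X i)).toReal := fun b => by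
    rw [hJ b, hindep.lintegral_pi_map hXmeas (by fun_prop)]
    exact integral_eq_lintegral_of_nonneg_ae (ae_of_all _ fun ω => hH0 _)
      (hH.comp ((measurable_pi_lambda _ hXmeas).sub_const b)).aestronglyMeasurable
  have hmin_at_zero := lintegral_pi_le_lintegral_pi_comp_sub (fun i => (hπ i).1) hπsu
    (fun i => (hπ i).2.2) hH hH0 hHmono xt
  rw [hJ_eq, hJ_eq, ← Pi.zero_def]
  refine ENNReal.toReal_mono ?_ (by simpa using hmin_at_zero)
  rw [hindep.lintegral_pi_map hXmeas (by fun_prop)]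
  exact (integrable_sensorCost hne hκ (fun i => integrable_sq_norm_sub_const
    (hXmeas i).aestronglyMeasurable (hXm i) (xt i)) fun i ω => sq_nonneg _).lintegral_lt_top.ne
end

section
/- Let X¹ ∈ ℝ^{n₁} and X² ∈ ℝ^{n₂} be independent random vectors with finite second moments whose probability density functions are symmetric and unimodal around 0, and let w₁, w₂ > 0 and τ₁, τ₂ ≥ 0. Define J(x̃¹, x̃²) = E[ min{ w₁‖X¹ − x̃¹‖² + w₂‖X² − x̃²‖², w₂‖X² − x̃²‖² + τ₁, w₁‖X¹ − x̃¹‖² + τ₂ } ]. Then (0, 0) is a global minimizer of J, i.e., J(0, 0) ≤ J(x̃¹, x̃²) for all (x̃¹, x̃²) ∈ ℝ^{n₁} × ℝ^{n₂}. -/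
open MeasureTheory ProbabilityTheory

/-!
Conditioning on one source, the cost is a truncated radially nondecreasing function of the
other: for fixed `v` it equals `min (w₁‖u‖² + min (w₂‖v‖²) τ₂) (w₂‖v‖² + τ₁)`, and symmetrically.
By independence and Fubini it therefore suffices to show that recentring such a function
`min (h x) d` at the origin lowers its expectation against a symmetric unimodal density.
Writing `min (h x) d = d - g x` with `g ≥ 0` radially nonincreasing, the layer-cake formula
reduces this to comparing the mass of a radial superlevel set `S` with that of its translate
`θ + S`: both have the same Lebesgue measure, and the density is larger on `S \ (θ + S)` than on
`(θ + S) \ S`, because every point of `S` is closer to the origin than every point outside it.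
-/

open Set
open scoped ENNReal

def RadiallyAntitone {E β : Type*} [Norm E] [LE β] (f : E → β) : Prop :=
  ∀ ⦃x y : E⦄, ‖x‖ ≤ ‖y‖ → f y ≤ f x

def RadiallyMonotone {E β : Type*} [Norm E] [LE β] (f : E → β) : Prop :=
  ∀ ⦃x y : E⦄, ‖x‖ ≤ ‖y‖ → f x ≤ f y

theorem SymmUnimodal.radiallyAntitone_ofReal {n : ℕ} {π : EuclideanSpace ℝ (Fin n) → ℝ}
    (h : SymmUnimodal π 0) : RadiallyAntitone fun x => ENNReal.ofReal (π x) :=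
  fun x y hxy => ENNReal.ofReal_le_ofReal (h x y (by simpa only [sub_zero] using hxy))

theorem setLIntegral_le_setLIntegral_of_measure_eq {α : Type*} [MeasurableSpace α]
    {ν : Measure α} {f : α → ℝ≥0∞} {s t : Set α} (hs : MeasurableSet s) (ht : MeasurableSet t)
    (hst : ν s = ν t) (hf : ∀ x ∈ s, ∀ y ∈ t, f x ≤ f y) :
    ∫⁻ x in s, f x ∂ν ≤ ∫⁻ y in t, f y ∂ν := by
  set c := ⨆ x ∈ s, f x
  calc ∫⁻ x in s, f x ∂ν ≤ ∫⁻ _ in s, c ∂ν :=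
        setLIntegral_mono' hs fun x hx => le_iSup₂ (f := fun x _ => f x) x hx
    _ = ∫⁻ _ in t, c ∂ν := by rw [setLIntegral_const, setLIntegral_const, hst]
    _ ≤ ∫⁻ y in t, f y ∂ν := setLIntegral_mono' ht fun y hy => iSup₂_le fun x hx => hf x hx y hy

section Rearrangement

variable {E : Type*} [NormedAddCommGroup E] [MeasurableSpace E] [BorelSpace E] [ProperSpace E]
  (μ : Measure E) [μ.IsAddRightInvariant] [IsFiniteMeasureOnCompacts μ] {f : E → ℝ≥0∞}

/-- `RadiallyAntitone (· ∈ S)` uses the order `p ≤ q ↔ (p → q)` on `Prop`: `S` contains every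
point at most as far from the origin as one of its points. -/
theorem withDensity_preimage_sub_const_le (hf : RadiallyAntitone f) {S : Set E}
    (hS : MeasurableSet S) (hS_rad : RadiallyAntitone (· ∈ S)) (θ : E) :
    μ.withDensity f ((· - θ) ⁻¹' S) ≤ μ.withDensity f S := by
  rcases eq_or_ne S univ with rfl | hS_ne
  · simp
  obtain ⟨y, hy⟩ := nonempty_compl.2 hS_ne
  set T := (· - θ) ⁻¹' S
  have hT : MeasurableSet T := measurable_sub_const θ hS
  have hS_norm : ∀ x ∈ S, ‖x‖ < ‖y‖ := fun x hx => not_le.1 fun h => hy (hS_rad h hx)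
  have hS_bdd : S ⊆ Metric.closedBall 0 ‖y‖ :=
    fun x hx => mem_closedBall_zero_iff.2 (hS_norm x hx).le
  have hTS : μ T = μ S := by
    simpa only [T, sub_eq_add_neg] using measure_preimage_add_right μ (-θ) S
  have hfin : μ (T ∩ S) ≠ ∞ :=
    ((measure_mono (inter_subset_right.trans hS_bdd)).trans_lt measure_closedBall_lt_top).ne
  have hdiff : μ (T \ S) = μ (S \ T) :=
    measure_sdiff_symm hT.nullMeasurableSet hS.nullMeasurableSet hTS hfin
  rw [← measure_inter_add_sdiff T hS, ← measure_inter_add_sdiff S hT, inter_comm,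
    withDensity_apply _ (hT.diff hS), withDensity_apply _ (hS.diff hT)]
  refine add_le_add_right (setLIntegral_le_setLIntegral_of_measure_eq (hT.diff hS) (hS.diff hT)
    hdiff fun x hx z hz => hf (not_le.1 fun h => hx.2 (hS_rad h hz.1)).le) _

theorem lintegral_comp_sub_const_le (hf : RadiallyAntitone f) {g : E → ℝ} (hg : Measurable g)
    (hg_nonneg : ∀ x, 0 ≤ g x) (hg_rad : RadiallyAntitone g) (θ : E) :
    ∫⁻ x, ENNReal.ofReal (g (x - θ)) ∂μ.withDensity f ≤
      ∫⁻ x, ENNReal.ofReal (g x) ∂μ.withDensity f := by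
  rw [lintegral_eq_lintegral_meas_lt (f := fun x => g (x - θ)) _
      (.of_forall fun x => hg_nonneg _) (hg.comp (measurable_sub_const θ)).aemeasurable,
    lintegral_eq_lintegral_meas_lt _ (.of_forall hg_nonneg) hg.aemeasurable]
  exact lintegral_mono fun t => withDensity_preimage_sub_const_le μ hf
    (measurableSet_lt measurable_const hg) (fun x y hxy hy => hy.trans_le (hg_rad hxy)) θ

theorem integral_comp_sub_const_le [IsFiniteMeasure (μ.withDensity f)] (hf : RadiallyAntitone f)
    {g : E → ℝ} (hg : Measurable g) (hg_nonneg : ∀ x, 0 ≤ g x) (hg_rad : RadiallyAntitone g)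
    (θ : E) :
    ∫ x, g (x - θ) ∂μ.withDensity f ≤ ∫ x, g x ∂μ.withDensity f := by
  have hg_sub : Measurable fun x => g (x - θ) := hg.comp (measurable_sub_const θ)
  have hfin : ∫⁻ x, ENNReal.ofReal (g x) ∂μ.withDensity f ≠ ∞ := by
    refine ne_top_of_le_ne_top (lintegral_const_lt_top (ENNReal.ofReal_ne_top (r := g 0))).ne
      (lintegral_mono fun x => ENNReal.ofReal_le_ofReal (hg_rad ?_))
    simp
  rw [integral_eq_lintegral_of_nonneg_ae (f := fun x => g (x - θ))
      (.of_forall fun x => hg_nonneg _) hg_sub.aestronglyMeasurable,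
    integral_eq_lintegral_of_nonneg_ae (.of_forall hg_nonneg) hg.aestronglyMeasurable]
  exact ENNReal.toReal_mono hfin (lintegral_comp_sub_const_le μ hf hg hg_nonneg hg_rad θ)

theorem integral_min_le_integral_min_comp_sub_const [IsProbabilityMeasure (μ.withDensity f)]
    (hf : RadiallyAntitone f) {h : E → ℝ} (hh : Measurable h) (hh_rad : RadiallyMonotone h)
    (d : ℝ) (θ : E) :
    ∫ x, min (h x) d ∂μ.withDensity f ≤ ∫ x, min (h (x - θ)) d ∂μ.withDensity f := by
  set g : E → ℝ := fun x => d - min (h x) d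
  have hg : Measurable g := measurable_const.sub (hh.min measurable_const)
  have hg_nonneg : ∀ x, 0 ≤ g x := fun x => sub_nonneg.2 (min_le_right _ _)
  have hg_rad : RadiallyAntitone g :=
    fun x y hxy => sub_le_sub_left (min_le_min_right d (hh_rad hxy)) d
  have hsplit : ∀ c, ∫ x, min (h (x - c)) d ∂μ.withDensity f =
      d - ∫ x, g (x - c) ∂μ.withDensity f := by
    intro c
    have hint : Integrable (fun x => g (x - c)) (μ.withDensity f) :=
      .of_bound (hg.comp (measurable_sub_const c)).aestronglyMeasurable (g 0)
        (.of_forall fun x => by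
          rw [Real.norm_of_nonneg (hg_nonneg _)]
          exact hg_rad (by simp))
    calc ∫ x, min (h (x - c)) d ∂μ.withDensity f = ∫ x, (d - g (x - c)) ∂μ.withDensity f := by
          simp [g]
      _ = d - ∫ x, g (x - c) ∂μ.withDensity f := by
          rw [integral_sub (integrable_const d) hint, integral_const, probReal_univ, one_smul]
  have hsplit_zero := hsplit 0
  simp only [sub_zero] at hsplit_zero
  rw [hsplit_zero, hsplit θ]
  linarith [integral_comp_sub_const_le μ hf hg hg_nonneg hg_rad θ]

end Rearrangement

section Fubini

variable {α β : Type*} [MeasurableSpace α] [MeasurableSpace β] {μ : Measure α} {ν : Measure β}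
  [SFinite μ] [SFinite ν] {F G : α × β → ℝ}

theorem integral_prod_le_of_forall_fst (hF : Integrable F (μ.prod ν))
    (hG : Integrable G (μ.prod ν)) (h : ∀ x, ∫ y, F (x, y) ∂ν ≤ ∫ y, G (x, y) ∂ν) :
    ∫ z, F z ∂μ.prod ν ≤ ∫ z, G z ∂μ.prod ν := by
  rw [integral_prod F hF, integral_prod G hG]
  exact integral_mono hF.integral_prod_left hG.integral_prod_left h

theorem integral_prod_le_of_forall_snd (hF : Integrable F (μ.prod ν))
    (hG : Integrable G (μ.prod ν)) (h : ∀ y, ∫ x, F (x, y) ∂μ ≤ ∫ x, G (x, y) ∂μ) :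
    ∫ z, F z ∂μ.prod ν ≤ ∫ z, G z ∂μ.prod ν := by
  rw [integral_prod_symm F hF, integral_prod_symm G hG]
  exact integral_mono hF.integral_prod_right hG.integral_prod_right h

end Fubini

section WeightedCost

variable {E₁ E₂ : Type*} [NormedAddCommGroup E₁] [NormedAddCommGroup E₂] {w₁ w₂ τ₁ τ₂ : ℝ}

def weightedCost (w₁ w₂ τ₁ τ₂ : ℝ) (u : E₁) (v : E₂) : ℝ :=
  min (w₁ * ‖u‖ ^ 2 + w₂ * ‖v‖ ^ 2) (min (w₂ * ‖v‖ ^ 2 + τ₁) (w₁ * ‖u‖ ^ 2 + τ₂))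

theorem weightedCost_eq_min_fst (u : E₁) (v : E₂) :
    weightedCost w₁ w₂ τ₁ τ₂ u v =
      min (w₁ * ‖u‖ ^ 2 + min (w₂ * ‖v‖ ^ 2) τ₂) (w₂ * ‖v‖ ^ 2 + τ₁) := by
  rw [weightedCost, min_comm (_ + τ₁), ← min_assoc, min_add_add_left]

theorem weightedCost_eq_min_snd (u : E₁) (v : E₂) :
    weightedCost w₁ w₂ τ₁ τ₂ u v =
      min (w₂ * ‖v‖ ^ 2 + min (w₁ * ‖u‖ ^ 2) τ₁) (w₁ * ‖u‖ ^ 2 + τ₂) := by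
  rw [weightedCost, add_comm (w₁ * _), ← min_assoc, min_add_add_left]

theorem continuous_weightedCost_sub (a : E₁) (b : E₂) :
    Continuous fun p : E₁ × E₂ => weightedCost w₁ w₂ τ₁ τ₂ (p.1 - a) (p.2 - b) := by
  unfold weightedCost
  fun_prop

theorem abs_weightedCost_le (hw₁ : 0 ≤ w₁) (hw₂ : 0 ≤ w₂) (u : E₁) (v : E₂) :
    |weightedCost w₁ w₂ τ₁ τ₂ u v| ≤ w₁ * ‖u‖ ^ 2 + |τ₁| + |τ₂| := by
  have hu : 0 ≤ w₁ * ‖u‖ ^ 2 := by positivity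
  have hv : 0 ≤ w₂ * ‖v‖ ^ 2 := by positivity
  have hupper : weightedCost w₁ w₂ τ₁ τ₂ u v ≤ w₁ * ‖u‖ ^ 2 + τ₂ :=
    (min_le_right _ _).trans (min_le_right _ _)
  have hlower : -|τ₁| - |τ₂| ≤ weightedCost w₁ w₂ τ₁ τ₂ u v := by
    refine le_min ?_ (le_min ?_ ?_) <;>
      linarith [neg_abs_le τ₁, neg_abs_le τ₂, abs_nonneg τ₁, abs_nonneg τ₂]
  rw [abs_le]
  constructor <;> linarith [le_abs_self τ₂, abs_nonneg τ₁, abs_nonneg τ₂]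

theorem integrable_weightedCost_comp_sub [MeasurableSpace E₁] [BorelSpace E₁]
    [SecondCountableTopology E₁] [MeasurableSpace E₂] [BorelSpace E₂] [SecondCountableTopology E₂]
    {ν₁ : Measure E₁} {ν₂ : Measure E₂} [IsFiniteMeasure ν₁] [IsFiniteMeasure ν₂]
    (hw₁ : 0 ≤ w₁) (hw₂ : 0 ≤ w₂) (hν₁ : Integrable (fun x => ‖x‖ ^ 2) ν₁) (a : E₁) (b : E₂) :
    Integrable (fun p : E₁ × E₂ => weightedCost w₁ w₂ τ₁ τ₂ (p.1 - a) (p.2 - b)) (ν₁.prod ν₂) := by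
  have hmem : MemLp id 2 ν₁ := (memLp_two_iff_integrable_sq_norm aestronglyMeasurable_id).2 hν₁
  have hsq : Integrable (fun x => ‖x - a‖ ^ 2) ν₁ :=
    (hmem.sub (memLp_const a)).integrable_norm_pow two_ne_zero
  have hbound :=
    (((hsq.const_mul w₁).add (integrable_const |τ₁|)).add (integrable_const |τ₂|)).comp_fst ν₂
  exact hbound.mono' (continuous_weightedCost_sub a b).aestronglyMeasurable
    (.of_forall fun p => abs_weightedCost_le hw₁ hw₂ _ _)

end WeightedCost

theorem integral_weightedCost_le_integral_weightedCost_comp_sub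
    {E₁ E₂ : Type*} [NormedAddCommGroup E₁] [MeasurableSpace E₁] [BorelSpace E₁] [ProperSpace E₁]
    [NormedAddCommGroup E₂] [MeasurableSpace E₂] [BorelSpace E₂] [ProperSpace E₂]
    (μ₁ : Measure E₁) [μ₁.IsAddRightInvariant] [IsFiniteMeasureOnCompacts μ₁]
    (μ₂ : Measure E₂) [μ₂.IsAddRightInvariant] [IsFiniteMeasureOnCompacts μ₂]
    {f₁ : E₁ → ℝ≥0∞} {f₂ : E₂ → ℝ≥0∞}
    [IsProbabilityMeasure (μ₁.withDensity f₁)] [IsProbabilityMeasure (μ₂.withDensity f₂)]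
    (hf₁ : RadiallyAntitone f₁) (hf₂ : RadiallyAntitone f₂) {w₁ w₂ τ₁ τ₂ : ℝ}
    (hw₁ : 0 ≤ w₁) (hw₂ : 0 ≤ w₂) (hsq : Integrable (fun x => ‖x‖ ^ 2) (μ₁.withDensity f₁))
    (a : E₁) (b : E₂) :
    ∫ p, weightedCost w₁ w₂ τ₁ τ₂ p.1 p.2 ∂(μ₁.withDensity f₁).prod (μ₂.withDensity f₂) ≤
      ∫ p, weightedCost w₁ w₂ τ₁ τ₂ (p.1 - a) (p.2 - b)
        ∂(μ₁.withDensity f₁).prod (μ₂.withDensity f₂) := by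
  have hint := integrable_weightedCost_comp_sub (ν₂ := μ₂.withDensity f₂) (τ₁ := τ₁) (τ₂ := τ₂)
    hw₁ hw₂ hsq
  calc ∫ p, weightedCost w₁ w₂ τ₁ τ₂ p.1 p.2 ∂(μ₁.withDensity f₁).prod (μ₂.withDensity f₂)
      = ∫ p, weightedCost w₁ w₂ τ₁ τ₂ (p.1 - 0) (p.2 - 0)
          ∂(μ₁.withDensity f₁).prod (μ₂.withDensity f₂) := by simp only [sub_zero]
    _ ≤ ∫ p, weightedCost w₁ w₂ τ₁ τ₂ (p.1 - 0) (p.2 - b)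
          ∂(μ₁.withDensity f₁).prod (μ₂.withDensity f₂) := by
      refine integral_prod_le_of_forall_fst (hint 0 0) (hint 0 b) fun x => ?_
      simp only [sub_zero, weightedCost_eq_min_snd]
      exact integral_min_le_integral_min_comp_sub_const μ₂ hf₂ (by fun_prop)
        (fun u v huv => by gcongr) _ b
    _ ≤ ∫ p, weightedCost w₁ w₂ τ₁ τ₂ (p.1 - a) (p.2 - b)
          ∂(μ₁.withDensity f₁).prod (μ₂.withDensity f₂) := by
      refine integral_prod_le_of_forall_snd (hint 0 b) (hint a b) fun y => ?_
      simp only [sub_zero, weightedCost_eq_min_fst]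
      exact integral_min_le_integral_min_comp_sub_const μ₁ hf₁ (by fun_prop)
        (fun u v huv => by gcongr) _ a

theorem zero_is_global_minimizer_weighted_general
    {Ω : Type} [MeasurableSpace Ω] (μ : Measure Ω) [IsProbabilityMeasure μ]
    (n₁ n₂ : ℕ)
    (X1 : Ω → EuclideanSpace ℝ (Fin n₁)) (X2 : Ω → EuclideanSpace ℝ (Fin n₂))
    (hX1 : Measurable X1) (hX2 : Measurable X2)
    (π₁ : EuclideanSpace ℝ (Fin n₁) → ℝ) (π₂ : EuclideanSpace ℝ (Fin n₂) → ℝ)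
    (hπ₁ : IsDensityOf μ X1 π₁) (hπ₂ : IsDensityOf μ X2 π₂)
    (hπ₁su : SymmUnimodal π₁ 0) (hπ₂su : SymmUnimodal π₂ 0)
    (hX1m : Integrable (fun ω => ‖X1 ω‖ ^ 2) μ)
    (hindep : IndepFun X1 X2 μ)
    (w₁ w₂ τ₁ τ₂ : ℝ) (hw₁ : 0 < w₁) (hw₂ : 0 < w₂)
    (J : EuclideanSpace ℝ (Fin n₁) → EuclideanSpace ℝ (Fin n₂) → ℝ)
    (hJ : ∀ xt1 xt2, J xt1 xt2 = ∫ ω, min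
      (w₁ * ‖X1 ω - xt1‖ ^ 2 + w₂ * ‖X2 ω - xt2‖ ^ 2)
      (min (w₂ * ‖X2 ω - xt2‖ ^ 2 + τ₁) (w₁ * ‖X1 ω - xt1‖ ^ 2 + τ₂)) ∂μ) :
    ∀ xt1 xt2, J 0 0 ≤ J xt1 xt2 := by
  intro a b
  obtain ⟨-, -, hlaw₁⟩ := hπ₁
  obtain ⟨-, -, hlaw₂⟩ := hπ₂
  set ν₁ := (volume : Measure (EuclideanSpace ℝ (Fin n₁))).withDensity fun x => .ofReal (π₁ x)
  set ν₂ := (volume : Measure (EuclideanSpace ℝ (Fin n₂))).withDensity fun x => .ofReal (π₂ x)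
  have : IsProbabilityMeasure ν₁ := hlaw₁ ▸ Measure.isProbabilityMeasure_map hX1.aemeasurable
  have : IsProbabilityMeasure ν₂ := hlaw₂ ▸ Measure.isProbabilityMeasure_map hX2.aemeasurable
  have hsq : Integrable (fun x => ‖x‖ ^ 2) ν₁ :=
    hlaw₁ ▸ (integrable_map_measure (by fun_prop) hX1.aemeasurable).2 hX1m
  have hJ_prod : ∀ a b, J a b = ∫ p, weightedCost w₁ w₂ τ₁ τ₂ (p.1 - a) (p.2 - b) ∂ν₁.prod ν₂ := by
    intro a b
    rw [hJ, ← hlaw₁, ← hlaw₂,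
      ← (indepFun_iff_map_prod_eq_prod_map_map hX1.aemeasurable hX2.aemeasurable).1 hindep,
      integral_map (hX1.prodMk hX2).aemeasurable
        (continuous_weightedCost_sub a b).aestronglyMeasurable]
    rfl
  rw [hJ_prod, hJ_prod]
  simpa only [sub_zero] using integral_weightedCost_le_integral_weightedCost_comp_sub _ _
    (SymmUnimodal.radiallyAntitone_ofReal hπ₁su) (SymmUnimodal.radiallyAntitone_ofReal hπ₂su)
    hw₁.le hw₂.le hsq a b

/-- Per-stage optimization with unequal distortion weights
`w₁, w₂ > 0` and unequal continuation-plus-communication cost differences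
`τ₁, τ₂ ≥ 0`: if the densities of the independent sources are symmetric and unimodal
around the origin, then `(0, 0)` is a global minimizer of
`J(x̃¹, x̃²) = E[min{w₁‖X¹−x̃¹‖² + w₂‖X²−x̃²‖², w₂‖X²−x̃²‖² + τ₁, w₁‖X¹−x̃¹‖² + τ₂}]`. -/
theorem zero_is_global_minimizer_weighted
    {Ω : Type} [MeasurableSpace Ω] (μ : Measure Ω) [IsProbabilityMeasure μ]
    (n₁ n₂ : ℕ)
    (X1 : Ω → EuclideanSpace ℝ (Fin n₁)) (X2 : Ω → EuclideanSpace ℝ (Fin n₂))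
    (hX1 : Measurable X1) (hX2 : Measurable X2)
    (π₁ : EuclideanSpace ℝ (Fin n₁) → ℝ) (π₂ : EuclideanSpace ℝ (Fin n₂) → ℝ)
    (hπ₁ : IsDensityOf μ X1 π₁) (hπ₂ : IsDensityOf μ X2 π₂)
    (hπ₁su : SymmUnimodal π₁ 0) (hπ₂su : SymmUnimodal π₂ 0)
    (hX1m : Integrable (fun ω => ‖X1 ω‖ ^ 2) μ)
    (hX2m : Integrable (fun ω => ‖X2 ω‖ ^ 2) μ)
    (hindep : IndepFun X1 X2 μ)
    (w₁ w₂ τ₁ τ₂ : ℝ) (hw₁ : 0 < w₁) (hw₂ : 0 < w₂) (hτ₁ : 0 ≤ τ₁) (hτ₂ : 0 ≤ τ₂)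
    (J : EuclideanSpace ℝ (Fin n₁) → EuclideanSpace ℝ (Fin n₂) → ℝ)
    (hJ : ∀ xt1 xt2, J xt1 xt2 = ∫ ω, min
      (w₁ * ‖X1 ω - xt1‖ ^ 2 + w₂ * ‖X2 ω - xt2‖ ^ 2)
      (min (w₂ * ‖X2 ω - xt2‖ ^ 2 + τ₁) (w₁ * ‖X1 ω - xt1‖ ^ 2 + τ₂)) ∂μ) :
    ∀ xt1 xt2, J 0 0 ≤ J xt1 xt2 :=
  zero_is_global_minimizer_weighted_general μ n₁ n₂ X1 X2 hX1 hX2 π₁ π₂ hπ₁ hπ₂ hπ₁su hπ₂su hX1m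
    hindep w₁ w₂ τ₁ τ₂ hw₁ hw₂ J hJ
end
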